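/- arXiv:1803.08311 — 8 statements merged into one kernel-verified Lean document; each statement's English description precedes it below -/
import Mathlib

section
/- Let B ≥ 1, let F_B be the B×B Fourier transform matrix, let L ∈ ℝ^B and k ∈ ℝ, and let U be the 2B×2B unitary matrix [[0, Δ F_B],[Δ, 0]] where Δ = diag(e^{ikL_1}, …, e^{ikL_B}). Then every nonzero eigenvector a ∈ ℂ^{2B} of U satisfies S(a) ≥ (1/2) log B + log 2, and for every σ with 0 < σ < 1 it satisfies R_{σ/(1−σ)}(a) + R_{−σ/(1+σ)}(a) ≥ log B + 2 log 2. -/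
/-!
Write `a = (x, y)`. The eigenvalue equation reads `Δ F y = μ x`, `Δ x = μ y`; as `Δ` is a diagonal
of phases and `F` is unitary, `|μ| = 1`, `|x| = |y|` and `|F y| = |y|` entrywise. So the
distribution `|a_b|² / ‖a‖²` is that of `y` split into two halves, which adds `log 2` to every
entropy, and the Rényi bound becomes the entropic uncertainty principle
`R_{σ/(1-σ)}(F y) + R_{-σ/(1+σ)}(y) ≥ log B`. This is the logarithm of the Hausdorff–Young
inequality `‖F y‖_q ≤ B^{-σ/2} ‖y‖_p` for `p = 2/(1+σ)`, `q = 2/(1-σ)`, obtained by Riesz–Thorin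
interpolation (Hadamard's three lines theorem) between Parseval's identity and the entrywise bound
`|F_jk| = B^{-1/2}`. The Shannon bound is the limit `σ → 0⁺`, as `R_ρ → S` when `ρ → 0`.
-/

open Matrix

noncomputable section

/-- Shannon entropy of a vector (convention `0 · log 0 = 0`). -/
def shannonEnt {n : Type*} [Fintype n] (x : n → ℂ) : ℝ :=
  -∑ j, (‖x j‖ ^ 2 / ∑ i, ‖x i‖ ^ 2) * Real.log (‖x j‖ ^ 2 / ∑ i, ‖x i‖ ^ 2)

/-- Rényi entropy of a vector, for a parameter `ρ`. -/
def renyiEnt {n : Type*} [Fintype n] (ρ : ℝ) (x : n → ℂ) : ℝ :=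
  -(1 / ρ) * Real.log (∑ j, (‖x j‖ ^ 2 / ∑ i, ‖x i‖ ^ 2) ^ (1 + ρ))

/-- The `B × B` Fourier transform matrix, with `(j,k)` entry
`(1/√B) e^{2πi(j-1)(k-1)/B}` (zero-based indices in `Fin B`). -/
def fourierMat (B : ℕ) : Matrix (Fin B) (Fin B) ℂ :=
  Matrix.of fun j k =>
    (1 / Real.sqrt B : ℝ) *
      Complex.exp (2 * Real.pi * Complex.I * (j : ℕ) * (k : ℕ) / B)

open Filter Topology

section Entropy

variable {ι : Type*}

lemma comp_inr_ne_zero_of_norm_inl_eq {a : ι ⊕ ι → ℂ} (h : ∀ j, ‖a (.inl j)‖ = ‖a (.inr j)‖)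
    (ha : a ≠ 0) : a ∘ .inr ≠ 0 := by
  contrapose! ha
  ext (j | j)
  · exact norm_eq_zero.mp (by simpa [h] using congrFun ha j)
  · exact congrFun ha j

variable [Fintype ι]

lemma sum_norm_rpow_pos {x : ι → ℂ} (hx : x ≠ 0) (t : ℝ) : 0 < ∑ j, ‖x j‖ ^ t := by
  obtain ⟨j, hj⟩ := Function.ne_iff.mp hx
  exact Finset.sum_pos' (fun _ _ => by positivity)
    ⟨j, Finset.mem_univ _, Real.rpow_pos_of_pos (norm_pos_iff.mpr hj) t⟩

lemma sum_norm_sq_pos {x : ι → ℂ} (hx : x ≠ 0) : 0 < ∑ j, ‖x j‖ ^ 2 := by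
  simpa using sum_norm_rpow_pos hx 2

lemma renyiEnt_eq_log_sum_rpow {x : ι → ℂ} (hx : x ≠ 0) {ρ : ℝ} :
    renyiEnt ρ x =
      -(1 / ρ) * (Real.log (∑ j, ‖x j‖ ^ (2 * (1 + ρ))) - (1 + ρ) * Real.log (∑ j, ‖x j‖ ^ 2)) := by
  have hN := sum_norm_sq_pos hx
  have hterm : ∀ j, (‖x j‖ ^ 2 / ∑ i, ‖x i‖ ^ 2) ^ (1 + ρ)
      = ‖x j‖ ^ (2 * (1 + ρ)) / (∑ i, ‖x i‖ ^ 2) ^ (1 + ρ) := fun j => by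
    rw [Real.div_rpow (by positivity) hN.le, Real.rpow_mul (norm_nonneg _), Real.rpow_two]
  rw [renyiEnt, Finset.sum_congr rfl fun j _ => hterm j, ← Finset.sum_div,
    Real.log_div (sum_norm_rpow_pos hx _).ne' (by positivity), Real.log_rpow hN]

lemma renyiEnt_congr {ρ : ℝ} {x y : ι → ℂ} (h : ∀ j, ‖x j‖ = ‖y j‖) :
    renyiEnt ρ x = renyiEnt ρ y := by
  simp only [renyiEnt, h]

lemma sum_comp_norm_eq_two_mul_of_norm_inl_eq {a : ι ⊕ ι → ℂ}
    (h : ∀ j, ‖a (.inl j)‖ = ‖a (.inr j)‖) (f : ℝ → ℝ) :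
    ∑ i, f ‖a i‖ = 2 * ∑ j, f ‖a (.inr j)‖ := by
  simp only [Fintype.sum_sum_type, h, two_mul]

lemma renyiEnt_eq_add_log_two_of_norm_inl_eq {a : ι ⊕ ι → ℂ}
    (h : ∀ j, ‖a (.inl j)‖ = ‖a (.inr j)‖) (ha : a ≠ 0) {ρ : ℝ} (hρ : ρ ≠ 0) :
    renyiEnt ρ a = renyiEnt ρ (a ∘ .inr) + Real.log 2 := by
  have hy := comp_inr_ne_zero_of_norm_inl_eq h ha
  have hP := sum_norm_rpow_pos hy (2 * (1 + ρ))
  have hN := sum_norm_sq_pos hy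
  simp only [Function.comp_apply] at hP hN
  rw [renyiEnt_eq_log_sum_rpow ha, renyiEnt_eq_log_sum_rpow hy]
  simp only [Function.comp_apply]
  rw [sum_comp_norm_eq_two_mul_of_norm_inl_eq h (· ^ _),
    sum_comp_norm_eq_two_mul_of_norm_inl_eq h (· ^ 2),
    Real.log_mul two_ne_zero hP.ne', Real.log_mul two_ne_zero hN.ne']
  field_simp
  ring

lemma tendsto_renyiEnt_shannonEnt {x : ι → ℂ} (hx : x ≠ 0) :
    Tendsto (fun ρ => renyiEnt ρ x) (𝓝[≠] 0) (𝓝 (shannonEnt x)) := by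
  set π : ι → ℝ := fun j => ‖x j‖ ^ 2 / ∑ i, ‖x i‖ ^ 2
  have hπ : ∑ j, π j = 1 := by rw [← Finset.sum_div, div_self (sum_norm_sq_pos hx).ne']
  have hpow : ∀ j, HasDerivAt (fun ρ : ℝ => π j ^ (1 + ρ)) (π j * Real.log (π j)) 0 := by
    intro j
    rcases (show 0 ≤ π j by positivity).eq_or_lt with h | h
    · rw [← h, zero_mul]
      refine (hasDerivAt_const (0 : ℝ) (0 : ℝ)).congr_of_eventuallyEq ?_
      filter_upwards [eventually_gt_nhds (show (-1 : ℝ) < 0 by norm_num)] with ρ hρ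
      exact Real.zero_rpow (by linarith)
    · convert ((hasDerivAt_id' (x := (0 : ℝ))).const_add 1).const_rpow h using 1
      rw [add_zero, Real.rpow_one, mul_one, mul_comm]
  -- `renyiEnt ρ x` is minus the difference quotient at `0` of this function, which vanishes there
  have hlog : HasDerivAt (fun ρ : ℝ => Real.log (∑ j, π j ^ (1 + ρ))) (-shannonEnt x) 0 := by
    have := (HasDerivAt.fun_sum (u := Finset.univ) fun j _ => hpow j).log (by simp [hπ])
    simpa [hπ, shannonEnt] using this
  have := (hasDerivAt_iff_tendsto_slope_zero.mp hlog).neg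
  simp only [zero_add, neg_neg, smul_eq_mul] at this
  refine this.congr fun ρ => ?_
  simp [renyiEnt, π, hπ]

lemma le_two_mul_shannonEnt_of_le_renyiEnt_add_renyiEnt {x : ι → ℂ} (hx : x ≠ 0) {C : ℝ}
    (h : ∀ σ : ℝ, 0 < σ → σ < 1 → C ≤ renyiEnt (σ / (1 - σ)) x + renyiEnt (-σ / (1 + σ)) x) :
    C ≤ 2 * shannonEnt x := by
  have hlim : ∀ f : ℝ → ℝ, ContinuousAt f 0 → f 0 = 0 → (∀ σ ∈ Set.Ioo (0 : ℝ) 1, f σ ≠ 0) →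
      Tendsto (fun σ => renyiEnt (f σ) x) (𝓝[>] 0) (𝓝 (shannonEnt x)) := by
    intro f hf hf0 hfne
    refine (tendsto_renyiEnt_shannonEnt hx).comp (tendsto_nhdsWithin_iff.mpr ⟨?_, ?_⟩)
    · simpa only [hf0] using hf.tendsto.mono_left nhdsWithin_le_nhds
    · filter_upwards [Ioo_mem_nhdsGT zero_lt_one] using hfne
  have hsum := (hlim (fun σ => σ / (1 - σ)) (by fun_prop (disch := norm_num)) (by simp)
      fun σ hσ => div_ne_zero hσ.1.ne' (by linarith [hσ.2])).add
    (hlim (fun σ => -σ / (1 + σ)) (by fun_prop (disch := norm_num)) (by simp)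
      fun σ hσ => div_ne_zero (neg_ne_zero.mpr hσ.1.ne') (by linarith [hσ.1]))
  rw [← two_mul] at hsum
  refine ge_of_tendsto hsum ?_
  filter_upwards [Ioo_mem_nhdsGT zero_lt_one] with σ hσ using h σ hσ.1 hσ.2

end Entropy

lemma rpow_le_max_one_rpow {x r R : ℝ} (hx : 0 ≤ x) (hr : 0 ≤ r) (hrR : r ≤ R) :
    x ^ r ≤ max 1 x ^ R :=
  (Real.rpow_le_rpow hx (le_max_right 1 x) hr).trans
    (Real.rpow_le_rpow_of_exponent_le (le_max_left 1 x) hrR)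

section Interpolation

variable {ι κ : Type*}

/-- Entrywise `v_k |v_k|^(e - 1)`; where `v_k = 0` the junk value `0 / 0 = 0` gives `0`. -/
def phaseCpow (v : ι → ℂ) (e : ℂ) : ι → ℂ := fun k => v k / ‖v k‖ * (‖v k‖ : ℂ) ^ e

lemma norm_phaseCpow (v : ι → ℂ) {e : ℂ} (he : e.re ≠ 0) (k : ι) :
    ‖phaseCpow v e k‖ = ‖v k‖ ^ e.re := by
  rcases eq_or_ne (v k) 0 with h | h
  · simp [phaseCpow, h, Real.zero_rpow he]
  · have hn : 0 < ‖v k‖ := norm_pos_iff.mpr h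
    rw [phaseCpow, norm_mul, norm_div, Complex.norm_real, norm_norm, div_self hn.ne', one_mul,
      Complex.norm_cpow_eq_rpow_re_of_pos hn]

lemma phaseCpow_one (v : ι → ℂ) : phaseCpow v 1 = v := by
  ext k
  rcases eq_or_ne (v k) 0 with h | h <;> simp [phaseCpow, h]

lemma differentiable_phaseCpow (v : ι → ℂ) (k : ι) :
    Differentiable ℂ fun e => phaseCpow v e k := by
  rcases eq_or_ne (v k) 0 with h | h
  · simp [phaseCpow, h]
  · exact (differentiable_id.const_cpow (Or.inl (by simpa using h))).const_mul _

variable [Fintype ι] [Fintype κ]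

lemma sum_norm_phaseCpow_sq (v : ι → ℂ) {e : ℂ} (he : e.re ≠ 0) :
    ∑ k, ‖phaseCpow v e k‖ ^ 2 = ∑ k, ‖v k‖ ^ (2 * e.re) := by
  refine Finset.sum_congr rfl fun k _ => ?_
  rw [norm_phaseCpow v he, mul_comm, Real.rpow_mul (norm_nonneg _), Real.rpow_two]

lemma norm_dotProduct_mulVec_le_of_norm_apply_le {M : Matrix κ ι ℂ} {c : ℝ}
    (hM : ∀ j k, ‖M j k‖ ≤ c) (u : κ → ℂ) (v : ι → ℂ) :
    ‖u ⬝ᵥ M *ᵥ v‖ ≤ c * ((∑ j, ‖u j‖) * ∑ k, ‖v k‖) := by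
  calc ‖u ⬝ᵥ M *ᵥ v‖ ≤ ∑ j, ‖u j‖ * ∑ k, ‖M j k‖ * ‖v k‖ := by
        refine (norm_sum_le _ _).trans (Finset.sum_le_sum fun j _ => ?_)
        rw [norm_mul]
        gcongr
        exact (norm_sum_le _ _).trans_eq (by simp only [norm_mul])
    _ ≤ ∑ j, ‖u j‖ * ∑ k, c * ‖v k‖ := by gcongr; exact hM _ _
    _ = c * ((∑ j, ‖u j‖) * ∑ k, ‖v k‖) := by
        rw [Finset.sum_mul, Finset.mul_sum]
        exact Finset.sum_congr rfl fun j _ => by rw [← Finset.mul_sum]; ring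

lemma norm_dotProduct_mulVec_le_of_contraction {M : Matrix κ ι ℂ}
    (hM : ∀ v, ∑ j, ‖(M *ᵥ v) j‖ ^ 2 ≤ ∑ k, ‖v k‖ ^ 2) (u : κ → ℂ) (v : ι → ℂ) :
    ‖u ⬝ᵥ M *ᵥ v‖ ≤ √(∑ j, ‖u j‖ ^ 2) * √(∑ k, ‖v k‖ ^ 2) :=
  calc ‖u ⬝ᵥ M *ᵥ v‖ ≤ ∑ j, ‖u j‖ * ‖(M *ᵥ v) j‖ :=
        (norm_sum_le _ _).trans_eq (by simp only [norm_mul])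
    _ ≤ √(∑ j, ‖u j‖ ^ 2) * √(∑ j, ‖(M *ᵥ v) j‖ ^ 2) := Real.sum_mul_le_sqrt_mul_sqrt _ _ _
    _ ≤ √(∑ j, ‖u j‖ ^ 2) * √(∑ k, ‖v k‖ ^ 2) := by gcongr; exact hM v

open Complex HadamardThreeLines in
theorem norm_dotProduct_mulVec_le_interpolation {M : Matrix κ ι ℂ}
    (hM2 : ∀ v, ∑ j, ‖(M *ᵥ v) j‖ ^ 2 ≤ ∑ k, ‖v k‖ ^ 2) {c : ℝ} (hc : 0 ≤ c)
    (hMc : ∀ j k, ‖M j k‖ ≤ c) {σ : ℝ} (hσ0 : 0 < σ) (hσ1 : σ < 1) (w : κ → ℂ) (y : ι → ℂ) :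
    ‖w ⬝ᵥ M *ᵥ y‖ ≤
      c ^ σ * ((∑ j, ‖w j‖ ^ (2 / (1 + σ))) * ∑ k, ‖y k‖ ^ (2 / (1 + σ))) ^ ((1 + σ) / 2) := by
  have hσ : 0 < 1 + σ := by linarith
  set p := 2 / (1 + σ)
  set Pw := ∑ j, ‖w j‖ ^ p
  set Py := ∑ k, ‖y k‖ ^ p
  set e : ℂ → ℂ := fun s => (1 + s) / ↑(1 + σ)
  set G : ℂ → ℂ := fun s => phaseCpow w (e s) ⬝ᵥ M *ᵥ phaseCpow y (e s)
  have he : ∀ s : ℂ, (e s).re = (1 + s.re) / (1 + σ) := fun s => by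
    simp only [e, Complex.div_ofReal_re, Complex.add_re, Complex.one_re]
  have he0 : ∀ s : ℂ, 0 ≤ s.re → (e s).re ≠ 0 := fun s hs => by
    rw [he]; positivity
  have hG : Differentiable ℂ G := by
    have he' : Differentiable ℂ e := by fun_prop
    have hw : ∀ j, Differentiable ℂ fun s => phaseCpow w (e s) j :=
      fun j => (differentiable_phaseCpow w j).comp he'
    have hy : ∀ k, Differentiable ℂ fun s => phaseCpow y (e s) k :=
      fun k => (differentiable_phaseCpow y k).comp he'
    simp only [G, dotProduct, mulVec]
    fun_prop
  have hG0 : ∀ s ∈ re ⁻¹' {0}, ‖G s‖ ≤ √Pw * √Py := by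
    intro s (hs : s.re = 0)
    have h2 : 2 * (e s).re = p := by rw [he, hs]; ring
    have := norm_dotProduct_mulVec_le_of_contraction hM2 (phaseCpow w (e s)) (phaseCpow y (e s))
    rwa [sum_norm_phaseCpow_sq _ (he0 s hs.ge), sum_norm_phaseCpow_sq _ (he0 s hs.ge), h2] at this
  have hG1 : ∀ s ∈ re ⁻¹' {1}, ‖G s‖ ≤ c * (Pw * Py) := by
    intro s (hs : s.re = 1)
    have h1 : (e s).re = p := by rw [he, hs]; ring
    have := norm_dotProduct_mulVec_le_of_norm_apply_le hMc (phaseCpow w (e s)) (phaseCpow y (e s))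
    simpa only [norm_phaseCpow _ (he0 s (by rw [hs]; exact zero_le_one)), h1] using this
  have hbdd : BddAbove ((norm ∘ G) '' verticalClosedStrip 0 1) := by
    refine ⟨c * ((∑ j, max 1 ‖w j‖ ^ (2 : ℝ)) * ∑ k, max 1 ‖y k‖ ^ (2 : ℝ)), ?_⟩
    rintro _ ⟨s, ⟨hs0, hs1⟩, rfl⟩
    have hr0 : 0 ≤ (e s).re := by rw [he]; positivity
    have hr2 : (e s).re ≤ 2 := by rw [he, div_le_iff₀ hσ]; linarith
    refine (norm_dotProduct_mulVec_le_of_norm_apply_le hMc _ _).trans ?_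
    simp only [norm_phaseCpow _ (he0 s hs0)]
    gcongr <;> exact rpow_le_max_one_rpow (norm_nonneg _) hr0 hr2
  have hGσ : G σ = w ⬝ᵥ M *ᵥ y := by
    have : e σ = 1 := by
      simp only [e]; push_cast; exact div_self (by exact_mod_cast hσ.ne')
    simp only [G, this, phaseCpow_one]
  have key := norm_le_interp_of_mem_verticalClosedStrip₀₁' G (z := σ)
    (by simp [verticalClosedStrip, hσ0.le, hσ1.le]) hG.diffContOnCl hbdd hG0 hG1
  rw [hGσ, Complex.ofReal_re] at key
  refine key.trans_eq ?_
  have hPP : 0 ≤ Pw * Py := by positivity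
  rw [← Real.sqrt_mul (by positivity), Real.sqrt_eq_rpow, ← Real.rpow_mul hPP,
    Real.mul_rpow hc hPP, mul_left_comm, ← Real.rpow_add' hPP (by linarith)]
  ring_nf

theorem sum_norm_mulVec_rpow_le {M : Matrix κ ι ℂ}
    (hM2 : ∀ v, ∑ j, ‖(M *ᵥ v) j‖ ^ 2 ≤ ∑ k, ‖v k‖ ^ 2) {c : ℝ} (hc : 0 ≤ c)
    (hMc : ∀ j k, ‖M j k‖ ≤ c) {σ : ℝ} (hσ0 : 0 < σ) (hσ1 : σ < 1) (y : ι → ℂ) :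
    (∑ j, ‖(M *ᵥ y) j‖ ^ (2 / (1 - σ))) ^ ((1 - σ) / 2) ≤
      c ^ σ * (∑ k, ‖y k‖ ^ (2 / (1 + σ))) ^ ((1 + σ) / 2) := by
  set z := M *ᵥ y
  set q := 2 / (1 - σ)
  set Z := ∑ j, ‖z j‖ ^ q
  have h1 : 1 - σ ≠ 0 := by linarith
  have hq : 2 < q := by rw [lt_div_iff₀ (by linarith)]; linarith
  -- the Hölder-dual vector of `z`: `w ⬝ᵥ z = ‖z‖_q ^ q = ‖w‖_p ^ p`
  set w : κ → ℂ := fun j => star (z j) * ((‖z j‖ ^ (q - 2) : ℝ) : ℂ)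
  have hwz : w ⬝ᵥ z = Z := by
    simp only [dotProduct, w, Z, Complex.ofReal_sum]
    refine Finset.sum_congr rfl fun j _ => ?_
    rw [mul_right_comm, Complex.star_def, Complex.conj_mul', ← Complex.ofReal_pow,
      ← Complex.ofReal_mul, ← Real.rpow_two, ← Real.rpow_add' (norm_nonneg _) (by linarith),
      add_sub_cancel]
  have hw : ∑ j, ‖w j‖ ^ (2 / (1 + σ)) = Z := by
    refine Finset.sum_congr rfl fun j _ => ?_
    rw [norm_mul, norm_star, Complex.norm_real, Real.norm_of_nonneg (by positivity),
      ← Real.rpow_one_add' (norm_nonneg _) (by linarith), ← Real.rpow_mul (norm_nonneg _)]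
    congr 1
    simp only [q]
    field_simp
    ring
  have key := norm_dotProduct_mulVec_le_interpolation hM2 hc hMc hσ0 hσ1 w y
  rw [hwz, hw, Complex.norm_real, Real.norm_of_nonneg (by positivity)] at key
  rcases (show 0 ≤ Z by positivity).eq_or_lt with hZ | hZ
  · rw [← hZ, Real.zero_rpow (by linarith)]
    positivity
  · rw [Real.mul_rpow hZ.le (by positivity), mul_left_comm] at key
    refine le_of_mul_le_mul_right ?_ (by positivity : 0 < Z ^ ((1 + σ) / 2))
    rw [← Real.rpow_add hZ, show (1 - σ) / 2 + (1 + σ) / 2 = 1 by ring, Real.rpow_one]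
    linarith

theorem neg_two_mul_log_le_renyiEnt_mulVec_add_renyiEnt {M : Matrix κ ι ℂ}
    (hM : ∀ v, ∑ j, ‖(M *ᵥ v) j‖ ^ 2 = ∑ k, ‖v k‖ ^ 2) {c : ℝ} (hc : 0 < c)
    (hMc : ∀ j k, ‖M j k‖ ≤ c) {y : ι → ℂ} (hy : y ≠ 0) {σ : ℝ} (hσ0 : 0 < σ) (hσ1 : σ < 1) :
    -2 * Real.log c ≤ renyiEnt (σ / (1 - σ)) (M *ᵥ y) + renyiEnt (-σ / (1 + σ)) y := by
  have hz : M *ᵥ y ≠ 0 := fun h0 => by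
    have := hM y
    rw [h0] at this
    simp only [Pi.zero_apply, norm_zero] at this
    exact (sum_norm_sq_pos hy).ne' (by simpa using this.symm)
  have hQ := sum_norm_rpow_pos hz (2 / (1 - σ))
  have hP := sum_norm_rpow_pos hy (2 / (1 + σ))
  have hlog := Real.log_le_log (by positivity)
    (sum_norm_mulVec_rpow_le (fun v => (hM v).le) hc.le hMc hσ0 hσ1 y)
  rw [Real.log_rpow hQ, Real.log_mul (by positivity) (by positivity), Real.log_rpow hc,
    Real.log_rpow hP] at hlog
  have h1 : 1 - σ ≠ 0 := by linarith
  have h2 : 1 + σ ≠ 0 := by linarith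
  have e1 : 2 * (1 + σ / (1 - σ)) = 2 / (1 - σ) := by field_simp; ring
  have e2 : 2 * (1 + -σ / (1 + σ)) = 2 / (1 + σ) := by field_simp; ring
  rw [renyiEnt_eq_log_sum_rpow hz, renyiEnt_eq_log_sum_rpow hy, hM y, e1, e2]
  set Q := Real.log (∑ j, ‖(M *ᵥ y) j‖ ^ (2 / (1 - σ)))
  set P := Real.log (∑ j, ‖y j‖ ^ (2 / (1 + σ)))
  set N := Real.log (∑ k, ‖y k‖ ^ 2)
  have hsum : -(1 / (σ / (1 - σ))) * (Q - (1 + σ / (1 - σ)) * N) +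
      -(1 / (-σ / (1 + σ))) * (P - (1 + -σ / (1 + σ)) * N) = ((1 + σ) * P - (1 - σ) * Q) / σ := by
    field_simp
    ring
  rw [hsum, le_div_iff₀ hσ0]
  linarith

end Interpolation

lemma ofReal_sum_norm_sq_eq_star_dotProduct {ι : Type*} [Fintype ι] (u : ι → ℂ) :
    ((∑ j, ‖u j‖ ^ 2 : ℝ) : ℂ) = star u ⬝ᵥ u := by
  simp [dotProduct, Complex.conj_mul']

lemma sum_norm_mulVec_sq_eq_of_conjTranspose_mul_self {ι κ : Type*} [Fintype ι] [Fintype κ]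
    [DecidableEq ι] {M : Matrix κ ι ℂ} (hM : Mᴴ * M = 1) (v : ι → ℂ) :
    ∑ j, ‖(M *ᵥ v) j‖ ^ 2 = ∑ k, ‖v k‖ ^ 2 := by
  apply Complex.ofReal_injective
  rw [ofReal_sum_norm_sq_eq_star_dotProduct, ofReal_sum_norm_sq_eq_star_dotProduct, star_mulVec,
    dotProduct_mulVec, vecMul_vecMul, hM, vecMul_one]

section Fourier

open Complex

lemma fourierMat_apply_eq_pow (B : ℕ) (j k : Fin B) :
    fourierMat B j k = ((√B)⁻¹ : ℝ) * exp (2 * Real.pi * I / B) ^ ((j : ℕ) * k) := by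
  rw [fourierMat, of_apply, one_div, ← Complex.exp_nat_mul]
  congr 2
  push_cast
  ring

lemma norm_fourierMat_apply {B : ℕ} (j k : Fin B) : ‖fourierMat B j k‖ = (√B)⁻¹ := by
  rw [fourierMat_apply_eq_pow, norm_mul, norm_pow,
    (isPrimitiveRoot_exp B j.pos.ne').norm'_eq_one j.pos.ne', one_pow, mul_one, norm_real,
    Real.norm_of_nonneg (by positivity)]

lemma fourierMat_conjTranspose_mul_self (B : ℕ) : (fourierMat B)ᴴ * fourierMat B = 1 := by
  ext k k'
  have hB : B ≠ 0 := k.pos.ne'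
  have hζ := isPrimitiveRoot_exp B hB
  set ζ := exp (2 * Real.pi * I / B)
  have hF : ∀ j k, fourierMat B j k = ((√B)⁻¹ : ℝ) * ζ ^ ((j : ℕ) * k) := fourierMat_apply_eq_pow B
  have hζ0 : ζ ^ (k : ℕ) ≠ 0 := pow_ne_zero _ (hζ.ne_zero hB)
  set η := (ζ ^ (k : ℕ))⁻¹ * ζ ^ (k' : ℕ)
  have hterm : ∀ j : Fin B,
      star (fourierMat B j k) * fourierMat B j k' = (B : ℂ)⁻¹ * η ^ (j : ℕ) := by
    intro j
    have hζk : ‖ζ ^ ((j : ℕ) * k)‖ = 1 := by rw [norm_pow, hζ.norm'_eq_one hB, one_pow]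
    rw [hF, hF, star_mul', star_def, conj_ofReal, ← Complex.inv_eq_conj hζk, mul_mul_mul_comm,
      ← ofReal_mul, ← mul_inv, Real.mul_self_sqrt (Nat.cast_nonneg B), ofReal_inv, ofReal_natCast,
      pow_mul', pow_mul' ζ, ← inv_pow, ← mul_pow]
  have hη : η ^ B = 1 := by
    rw [mul_pow, inv_pow, ← pow_mul', ← pow_mul', pow_mul, pow_mul, hζ.pow_eq_one, one_pow,
      one_pow, inv_one, one_mul]
  simp only [mul_apply, conjTranspose_apply, hterm, ← Finset.mul_sum,
    Fin.sum_univ_eq_sum_range (fun j => η ^ j), one_apply]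
  split_ifs with h
  · subst h
    simp [η, hζ0, hB]
  · have hη1 : η ≠ 1 := fun h1 => h (Fin.ext (hζ.pow_inj k.isLt k'.isLt
      ((inv_mul_eq_one₀ hζ0).mp h1)))
    rw [geom_sum_eq hη1, hη, sub_self, zero_div, mul_zero]

theorem log_le_renyiEnt_fourierMat_mulVec_add_renyiEnt {B : ℕ} {y : Fin B → ℂ} (hy : y ≠ 0)
    {σ : ℝ} (hσ0 : 0 < σ) (hσ1 : σ < 1) :
    Real.log B ≤ renyiEnt (σ / (1 - σ)) (fourierMat B *ᵥ y) + renyiEnt (-σ / (1 + σ)) y := by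
  obtain ⟨j, -⟩ := Function.ne_iff.mp hy
  have hB : (0 : ℝ) < B := by exact_mod_cast j.pos
  have hc : -2 * Real.log (√B)⁻¹ = Real.log B := by
    rw [Real.log_inv, Real.log_sqrt hB.le]
    ring
  exact hc ▸ neg_two_mul_log_le_renyiEnt_mulVec_add_renyiEnt
    (sum_norm_mulVec_sq_eq_of_conjTranspose_mul_self (fourierMat_conjTranspose_mul_self B))
    (by positivity) (fun j k => (norm_fourierMat_apply j k).le) hy hσ0 hσ1

end Fourier

theorem norm_eq_of_fromBlocks_mulVec_eq_smul {ι : Type*} [Fintype ι] [DecidableEq ι]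
    {d : ι → ℂ} (hd : ∀ j, ‖d j‖ = 1) {M : Matrix ι ι ℂ}
    (hM : ∀ v, ∑ j, ‖(M *ᵥ v) j‖ ^ 2 = ∑ k, ‖v k‖ ^ 2) {a : ι ⊕ ι → ℂ} (ha : a ≠ 0) {μ : ℂ}
    (h : fromBlocks 0 (diagonal d * M) (diagonal d) 0 *ᵥ a = μ • a) :
    (∀ j, ‖a (.inl j)‖ = ‖a (.inr j)‖) ∧ ∀ j, ‖(M *ᵥ (a ∘ .inr)) j‖ = ‖a (.inr j)‖ := by
  have h1 : ∀ j, ‖(M *ᵥ (a ∘ .inr)) j‖ = ‖μ‖ * ‖a (.inl j)‖ := fun j => by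
    simpa [fromBlocks_mulVec, ← mulVec_mulVec, mulVec_diagonal, hd] using
      congrArg norm (congrFun h (.inl j))
  have h2 : ∀ j, ‖a (.inl j)‖ = ‖μ‖ * ‖a (.inr j)‖ := fun j => by
    simpa [fromBlocks_mulVec, mulVec_diagonal, hd] using congrArg norm (congrFun h (.inr j))
  have hy : a ∘ .inr ≠ 0 := by
    contrapose! ha
    ext (j | j)
    · exact norm_eq_zero.mp
        (by rw [h2, show a (.inr j) = 0 from congrFun ha j, norm_zero, mul_zero])
    · exact congrFun ha j
  -- Parseval forces `|μ|⁴ = 1`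
  have hμ : ‖μ‖ = 1 := by
    have hS := sum_norm_sq_pos hy
    have := hM (a ∘ .inr)
    simp only [h1, h2, Function.comp_apply, mul_pow, ← Finset.mul_sum] at this hS
    have h4 : (‖μ‖ ^ 4 - 1) * ∑ j, ‖a (.inr j)‖ ^ 2 = 0 := by linear_combination this
    exact (pow_eq_one_iff_of_nonneg (norm_nonneg μ) (by norm_num)).mp
      (sub_eq_zero.mp ((mul_eq_zero.mp h4).resolve_right hS.ne'))
  exact ⟨fun j => by rw [h2, hμ, one_mul], fun j => by rw [h1, h2, hμ, one_mul, one_mul]⟩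

theorem entropy_bound_fourier_star_general (B : ℕ)
    (L : Fin B → ℝ) (k : ℝ)
    (Δ : Matrix (Fin B) (Fin B) ℂ)
    (hΔ : Δ = Matrix.diagonal fun j => Complex.exp (Complex.I * k * L j))
    (U : Matrix (Fin B ⊕ Fin B) (Fin B ⊕ Fin B) ℂ)
    (hU : U = Matrix.fromBlocks 0 (Δ * fourierMat B) Δ 0)
    (a : Fin B ⊕ Fin B → ℂ) (ha : a ≠ 0)
    (heig : ∃ μ : ℂ, U.mulVec a = μ • a) :
    shannonEnt a ≥ (1 / 2) * Real.log B + Real.log 2 ∧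
    ∀ σ : ℝ, 0 < σ → σ < 1 →
      renyiEnt (σ / (1 - σ)) a + renyiEnt (-σ / (1 + σ)) a ≥
        Real.log B + 2 * Real.log 2 := by
  obtain ⟨μ, hμ⟩ := heig
  subst hΔ hU
  obtain ⟨hxy, hFy⟩ := norm_eq_of_fromBlocks_mulVec_eq_smul (fun j => by simp [Complex.norm_exp])
    (sum_norm_mulVec_sq_eq_of_conjTranspose_mul_self (fourierMat_conjTranspose_mul_self B)) ha hμ
  have hrenyi : ∀ σ : ℝ, 0 < σ → σ < 1 →
      Real.log B + 2 * Real.log 2 ≤ renyiEnt (σ / (1 - σ)) a + renyiEnt (-σ / (1 + σ)) a := by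
    intro σ hσ0 hσ1
    have hF := log_le_renyiEnt_fourierMat_mulVec_add_renyiEnt
      (comp_inr_ne_zero_of_norm_inl_eq hxy ha) hσ0 hσ1
    rw [renyiEnt_congr (y := a ∘ .inr) hFy] at hF
    rw [renyiEnt_eq_add_log_two_of_norm_inl_eq hxy ha (div_ne_zero hσ0.ne' (by linarith)),
      renyiEnt_eq_add_log_two_of_norm_inl_eq hxy ha
        (div_ne_zero (neg_ne_zero.mpr hσ0.ne') (by linarith))]
    linarith
  exact ⟨by linarith [le_two_mul_shannonEnt_of_le_renyiEnt_add_renyiEnt ha hrenyi], hrenyi⟩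

/-- Entropy lower bounds for eigenvectors of a Fourier transform
star graph. -/
theorem entropy_bound_fourier_star (B : ℕ) (hB : 1 ≤ B)
    (L : Fin B → ℝ) (k : ℝ)
    (Δ : Matrix (Fin B) (Fin B) ℂ)
    (hΔ : Δ = Matrix.diagonal fun j => Complex.exp (Complex.I * k * L j))
    (U : Matrix (Fin B ⊕ Fin B) (Fin B ⊕ Fin B) ℂ)
    (hU : U = Matrix.fromBlocks 0 (Δ * fourierMat B) Δ 0)
    (a : Fin B ⊕ Fin B → ℂ) (ha : a ≠ 0)
    (heig : ∃ μ : ℂ, U.mulVec a = μ • a) :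
    shannonEnt a ≥ (1 / 2) * Real.log B + Real.log 2 ∧
    ∀ σ : ℝ, 0 < σ → σ < 1 →
      renyiEnt (σ / (1 - σ)) a + renyiEnt (-σ / (1 + σ)) a ≥
        Real.log B + 2 * Real.log 2 :=
  entropy_bound_fourier_star_general B L k Δ hΔ U hU a ha heig
end
end

section
/- Let B ≥ 1 and 0 < κ < π/2. Then x_+ and x_− are eigenvectors of the matrix P(κ) F_B P(κ) with eigenvalues λ_+ and λ_− respectively, where λ_± = (1/√B)·e^{iκ}·(±√(B − sin²κ) + i sin κ). Moreover λ_+ and λ_− are exactly the two roots of the quadratic equation λ² − (1/√B)(e^{2iκ} − 1)λ − e^{2iκ} = 0. -/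
/-!
Vectors of the shape `(a, b, …, b)` span a plane invariant under both `P(κ)` and `F_B`: `P(κ)`
only rescales the first coordinate, and `F_B` sends `(a, b, …, b)` to
`((a + (B - 1) b) / √B, (a - b) / √B, …, (a - b) / √B)`, because every row of `F_B` but the
first sums to zero. For `x_±` with first coordinate `x₀`, the eigenvector equation thus reduces
to `λ = (e^{iκ} x₀ - 1) / √B` and `λ (x₀ - e^{iκ}) = e^{iκ} √B`, both consequences of
`cos²κ + sin²κ = 1` and `(x₀ - cos κ)² = B - sin²κ`. That `λ_±` are the roots of the quadratic
is Vieta: `λ_+ + λ_- = (e^{2iκ} - 1) / √B` and `λ_+ λ_- = -e^{2iκ}`.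
-/

open Matrix

noncomputable section

/-- `P(κ) = diag(e^{iκ}, 1, …, 1)`. -/
def Pmat (B : ℕ) (κ : ℝ) : Matrix (Fin B) (Fin B) ℂ :=
  Matrix.diagonal fun m => if (m : ℕ) = 0 then Complex.exp (Complex.I * κ) else 1

/-- The vector `x_±` (sign `ε = ±1`): first component `cos κ ± √(B − sin²κ)`,
all other components `1`. -/
def xvec (B : ℕ) (κ ε : ℝ) : Fin B → ℂ := fun m =>
  if (m : ℕ) = 0 then
    ((Real.cos κ + ε * Real.sqrt ((B : ℝ) - Real.sin κ ^ 2) : ℝ) : ℂ)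
  else 1

/-- The eigenvalue `λ_± = (1/√B) e^{iκ} (± √(B − sin²κ) + i sin κ)`. -/
def lamF (B : ℕ) (κ ε : ℝ) : ℂ :=
  ((1 / Real.sqrt B : ℝ) : ℂ) * Complex.exp (Complex.I * κ) *
    ((ε : ℂ) * ((Real.sqrt ((B : ℝ) - Real.sin κ ^ 2) : ℝ) : ℂ) +
      Complex.I * ((Real.sin κ : ℝ) : ℂ))

section

open Complex

def firstRest (B : ℕ) (a b : ℂ) : Fin B → ℂ := fun m => if (m : ℕ) = 0 then a else b

def xvecHead (B : ℕ) (κ ε : ℝ) : ℝ :=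
  Real.cos κ + ε * Real.sqrt ((B : ℝ) - Real.sin κ ^ 2)

theorem xvec_eq_firstRest (B : ℕ) (κ ε : ℝ) :
    xvec B κ ε = firstRest B (xvecHead B κ ε) 1 :=
  rfl

theorem smul_firstRest (B : ℕ) (c a b : ℂ) :
    c • firstRest B a b = firstRest B (c * a) (c * b) := by
  ext m
  simp only [firstRest, Pi.smul_apply, smul_eq_mul]
  split_ifs <;> rfl

theorem Pmat_mulVec_firstRest (B : ℕ) (κ : ℝ) (a b : ℂ) :
    Pmat B κ *ᵥ firstRest B a b = firstRest B (exp (I * κ) * a) b := by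
  ext m
  simp only [Pmat, mulVec_diagonal, firstRest]
  split_ifs <;> simp

theorem sum_exp_two_pi_I_mul_mul_div_eq_zero {B m : ℕ} (hm : ¬ B ∣ m) :
    ∑ k : Fin B, exp (2 * Real.pi * I * m * (k : ℕ) / B) = 0 := by
  rcases Nat.eq_zero_or_pos B with rfl | hB
  · simp
  have hζ := isPrimitiveRoot_exp B hB.ne'
  set z := exp (2 * Real.pi * I / B) ^ m
  have hz : z ≠ 1 := fun h => hm ((hζ.pow_eq_one_iff_dvd m).mp h)
  have hzB : z ^ B = 1 := by rw [pow_right_comm, hζ.pow_eq_one, one_pow]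
  calc ∑ k : Fin B, exp (2 * Real.pi * I * m * (k : ℕ) / B)
      = ∑ k ∈ Finset.range B, z ^ k := by
        rw [← Fin.sum_univ_eq_sum_range]
        refine Finset.sum_congr rfl fun k _ => ?_
        rw [← pow_mul, ← exp_nat_mul]
        push_cast
        ring_nf
    _ = 0 := by rw [geom_sum_eq hz, hzB, sub_self, zero_div]

theorem sum_fourierMat_row (B : ℕ) (m : Fin B) :
    ∑ k, fourierMat B m k = firstRest B (((1 / Real.sqrt B : ℝ) : ℂ) * B) 0 m := by
  simp only [fourierMat, of_apply, ← Finset.mul_sum, firstRest]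
  split_ifs with hm
  · simp [hm]
  · rw [sum_exp_two_pi_I_mul_mul_div_eq_zero, mul_zero]
    exact Nat.not_dvd_of_pos_of_lt (Nat.pos_of_ne_zero hm) m.isLt

theorem fourierMat_mulVec_firstRest (B : ℕ) [NeZero B] (a b : ℂ) :
    fourierMat B *ᵥ firstRest B a b =
      firstRest B (((1 / Real.sqrt B : ℝ) : ℂ) * (a + (B - 1) * b))
        (((1 / Real.sqrt B : ℝ) : ℂ) * (a - b)) := by
  have hsplit : firstRest B a b = b • 1 + Pi.single 0 (a - b) := by
    ext k
    by_cases hk : k = 0 <;> simp [firstRest, hk, Fin.val_eq_zero_iff]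
  ext m
  have hcol : fourierMat B m 0 = ((1 / Real.sqrt B : ℝ) : ℂ) := by simp [fourierMat]
  rw [hsplit, mulVec_add, mulVec_smul, Pi.add_apply, Pi.smul_apply, mulVec, mulVec,
    dotProduct_one, dotProduct_single, hcol, sum_fourierMat_row]
  simp only [firstRest, smul_eq_mul]
  split_ifs <;> ring

theorem exp_I_mul_ofReal (κ : ℝ) : exp (I * κ) = Real.cos κ + Real.sin κ * I := by
  rw [mul_comm, exp_ofReal_mul_I]

theorem exp_two_mul_I_mul (κ : ℝ) : exp (2 * I * κ) = exp (I * κ) ^ 2 := by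
  rw [← exp_nat_mul]
  ring_nf

theorem ofReal_sqrt_sub_sin_sq_sq {B : ℕ} {κ : ℝ} (hB : Real.sin κ ^ 2 ≤ B) :
    (Real.sqrt ((B : ℝ) - Real.sin κ ^ 2) : ℂ) ^ 2 = B - (Real.sin κ : ℂ) ^ 2 := by
  exact_mod_cast Real.sq_sqrt (sub_nonneg.mpr hB)

theorem lamF_eq_mul_exp_mul_sub_one (B : ℕ) (κ ε : ℝ) :
    lamF B κ ε = ((1 / Real.sqrt B : ℝ) : ℂ) * (exp (I * κ) * xvecHead B κ ε - 1) := by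
  have hsc : (Real.sin κ : ℂ) ^ 2 + (Real.cos κ : ℂ) ^ 2 = 1 := by
    exact_mod_cast Real.sin_sq_add_cos_sq κ
  rw [lamF, xvecHead, exp_I_mul_ofReal, ofReal_add, ofReal_mul]
  linear_combination ((1 / Real.sqrt B : ℝ) : ℂ) * ((Real.sin κ : ℂ) ^ 2 * I_sq - hsc)

theorem lamF_mul_xvecHead_sub_exp {B : ℕ} {κ : ℝ} (hB : Real.sin κ ^ 2 ≤ B) {ε : ℝ}
    (hε : ε ^ 2 = 1) :
    lamF B κ ε * (xvecHead B κ ε - exp (I * κ)) =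
      exp (I * κ) * ((1 / Real.sqrt B : ℝ) : ℂ) * B := by
  have hε' : (ε : ℂ) ^ 2 = 1 := by exact_mod_cast hε
  rw [lamF, xvecHead, exp_I_mul_ofReal, ofReal_add, ofReal_mul]
  linear_combination ((1 / Real.sqrt B : ℝ) : ℂ) * (Real.cos κ + Real.sin κ * I) *
    ((Real.sqrt ((B : ℝ) - Real.sin κ ^ 2) : ℂ) ^ 2 * hε' + ofReal_sqrt_sub_sin_sq_sq hB
      - (Real.sin κ : ℂ) ^ 2 * I_sq)

theorem lamF_add_lamF_neg (B : ℕ) (κ : ℝ) :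
    lamF B κ 1 + lamF B κ (-1) = ((1 / Real.sqrt B : ℝ) : ℂ) * (exp (2 * I * κ) - 1) := by
  have hsc : (Real.sin κ : ℂ) ^ 2 + (Real.cos κ : ℂ) ^ 2 = 1 := by
    exact_mod_cast Real.sin_sq_add_cos_sq κ
  rw [lamF, lamF, exp_two_mul_I_mul, exp_I_mul_ofReal, ofReal_one, ofReal_neg, ofReal_one]
  linear_combination ((1 / Real.sqrt B : ℝ) : ℂ) * ((Real.sin κ : ℂ) ^ 2 * I_sq - hsc)

theorem lamF_mul_lamF_neg {B : ℕ} (hB : 1 ≤ B) (κ : ℝ) :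
    lamF B κ 1 * lamF B κ (-1) = -exp (2 * I * κ) := by
  have hs : ((1 / Real.sqrt B : ℝ) : ℂ) ^ 2 * B = 1 := by
    have hB0 : (0 : ℝ) < B := by exact_mod_cast hB
    have : (1 / Real.sqrt B) ^ 2 * B = 1 := by
      rw [div_pow, Real.sq_sqrt hB0.le]
      field_simp
    exact_mod_cast this
  have hr := ofReal_sqrt_sub_sin_sq_sq ((Real.sin_sq_le_one κ).trans (by exact_mod_cast hB))
  rw [lamF, lamF, exp_two_mul_I_mul, ofReal_one, ofReal_neg, ofReal_one]
  linear_combination exp (I * κ) ^ 2 *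
    (((1 / Real.sqrt B : ℝ) : ℂ) ^ 2 * ((Real.sin κ : ℂ) ^ 2 * I_sq - hr) - hs)

end

theorem sq_sub_add_mul_add_mul_eq_zero_iff {R : Type*} [CommRing R] [NoZeroDivisors R]
    {x a b : R} : x ^ 2 - (a + b) * x + a * b = 0 ↔ x = a ∨ x = b := by
  rw [show x ^ 2 - (a + b) * x + a * b = (x - a) * (x - b) by ring, mul_eq_zero, sub_eq_zero,
    sub_eq_zero]

theorem fourier_perturbed_eigenvectors_general (B : ℕ) (hB : 1 ≤ B)
    (κ : ℝ) :
    (∀ ε : ℝ, ε = 1 ∨ ε = -1 →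
      (Pmat B κ * fourierMat B * Pmat B κ).mulVec (xvec B κ ε) =
        lamF B κ ε • xvec B κ ε) ∧
    (∀ lam : ℂ,
      lam ^ 2 - ((1 / Real.sqrt B : ℝ) : ℂ) *
          (Complex.exp (2 * Complex.I * κ) - 1) * lam -
        Complex.exp (2 * Complex.I * κ) = 0 ↔
      lam = lamF B κ 1 ∨ lam = lamF B κ (-1)) := by
  have : NeZero B := ⟨by omega⟩
  refine ⟨fun ε hε => ?_, fun lam => ?_⟩
  · have hsin : Real.sin κ ^ 2 ≤ B :=
      (Real.sin_sq_le_one κ).trans (by exact_mod_cast hB)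
    have hε2 : ε ^ 2 = 1 := by rcases hε with rfl | rfl <;> norm_num
    rw [← mulVec_mulVec, ← mulVec_mulVec, xvec_eq_firstRest, Pmat_mulVec_firstRest,
      fourierMat_mulVec_firstRest, Pmat_mulVec_firstRest, smul_firstRest]
    congr 1
    · linear_combination -Complex.exp (Complex.I * κ) * lamF_eq_mul_exp_mul_sub_one B κ ε
        - lamF_mul_xvecHead_sub_exp hsin hε2
    · linear_combination -lamF_eq_mul_exp_mul_sub_one B κ ε
  · rw [← lamF_add_lamF_neg, ← neg_neg (Complex.exp _), ← lamF_mul_lamF_neg hB,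
      sub_neg_eq_add]
    exact sq_sub_add_mul_add_mul_eq_zero_iff

/-- `x_±` are eigenvectors of `P(κ) F_B P(κ)` with eigenvalues
`λ_±`, and `λ_±` are exactly the two roots of
`λ² − (1/√B)(e^{2iκ} − 1)λ − e^{2iκ} = 0`. -/
theorem fourier_perturbed_eigenvectors (B : ℕ) (hB : 1 ≤ B)
    (κ : ℝ) (hκ0 : 0 < κ) (hκ1 : κ < Real.pi / 2) :
    (∀ ε : ℝ, ε = 1 ∨ ε = -1 →
      (Pmat B κ * fourierMat B * Pmat B κ).mulVec (xvec B κ ε) =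
        lamF B κ ε • xvec B κ ε) ∧
    (∀ lam : ℂ,
      lam ^ 2 - ((1 / Real.sqrt B : ℝ) : ℂ) *
          (Complex.exp (2 * Complex.I * κ) - 1) * lam -
        Complex.exp (2 * Complex.I * κ) = 0 ↔
      lam = lamF B κ 1 ∨ lam = lamF B κ (-1)) :=
  fourier_perturbed_eigenvectors_general B hB κ

end
end

section
/- Let B ≥ 2 and 0 < κ < π/2. Set D = √(B − sin²κ) and N_± = √(B − sin²κ) ± cos κ. Then the Shannon entropy of x_± satisfies s(x_±) = log(2D) − ((N_±² − (B−1))/(N_±² + (B−1)))·log N_±. -/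
noncomputable section

/-- Exact Shannon entropy of `x_±`:
`s(x_±) = log(2D) − ((N² − (B−1))/(N² + (B−1))) log N` where
`D = √(B − sin²κ)` and `N = D ± cos κ`. -/
theorem shannon_entropy_xvec (B : ℕ) (hB : 2 ≤ B)
    (κ : ℝ) (hκ0 : 0 < κ) (hκ1 : κ < Real.pi / 2)
    (ε : ℝ) (hε : ε = 1 ∨ ε = -1)
    (D N : ℝ) (hD : D = Real.sqrt ((B : ℝ) - Real.sin κ ^ 2))
    (hN : N = Real.sqrt ((B : ℝ) - Real.sin κ ^ 2) + ε * Real.cos κ) :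
    shannonEnt (xvec B κ ε) =
      Real.log (2 * D) -
        ((N ^ 2 - ((B : ℝ) - 1)) / (N ^ 2 + ((B : ℝ) - 1))) * Real.log N := by

  haveI : NeZero B := ⟨by omega⟩
  have hε2 : ε ^ 2 = 1 := by rcases hε with rfl | rfl <;> norm_num
  have hpyth := Real.sin_sq_add_cos_sq κ
  have hBR : (2:ℝ) ≤ (B:ℝ) := by exact_mod_cast hB
  have hs1 : Real.sin κ ^ 2 ≤ 1 := Real.sin_sq_le_one κ
  have hDsq : D ^ 2 = (B:ℝ) - Real.sin κ ^ 2 := by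
    rw [hD]; exact Real.sq_sqrt (by linarith)
  have hD0 : 0 < D := by
    rw [hD]; apply Real.sqrt_pos.mpr; linarith
  have hc0 : 0 < Real.cos κ :=
    Real.cos_pos_of_mem_Ioo ⟨by linarith [Real.pi_pos], hκ1⟩
  have hcD : Real.cos κ < D := by nlinarith [hDsq, hpyth, hD0, hc0, hBR]
  have hN0 : 0 < N := by
    rcases hε with rfl | rfl <;> rw [hN, ← hD] <;> nlinarith [hcD, hc0]
  have hkey : N ^ 2 + ((B:ℝ) - 1) = 2 * D * N := by
    rw [hN, ← hD]; linear_combination hpyth - hDsq + Real.cos κ ^ 2 * hε2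
  have hT0 : (0:ℝ) < N ^ 2 + ((B:ℝ) - 1) := by nlinarith [sq_nonneg N]
  have hval : ∀ m : Fin B, ‖xvec B κ ε m‖ ^ 2 = if m = (0 : Fin B) then N ^ 2 else 1 := by
    intro m
    rcases eq_or_ne m 0 with rfl | hm
    · have h0 : (((0 : Fin B) : ℕ) = 0) := rfl
      simp only [xvec, h0, if_true, if_pos rfl]
      rw [Complex.norm_real, Real.norm_eq_abs, sq_abs, hN, ← hD]
      linear_combination (D ^ 2 - Real.cos κ ^ 2) * hε2
    · have h0 : ((m : ℕ) ≠ 0) := by intro h; exact hm (Fin.ext (by simp [h]))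
      simp [xvec, h0, hm]
  have hsum : ∑ i, ‖xvec B κ ε i‖ ^ 2 = N ^ 2 + ((B:ℝ) - 1) := by
    have h1 : ∀ m : Fin B, ‖xvec B κ ε m‖ ^ 2 = (if m = (0:Fin B) then N ^ 2 - 1 else 0) + 1 := by
      intro m; rw [hval m]; split <;> ring
    simp_rw [h1]
    rw [Finset.sum_add_distrib, Finset.sum_ite_eq' Finset.univ (0:Fin B) (fun _ => N ^ 2 - 1)]
    simp
    ring
  simp only [shannonEnt]
  simp only [hsum]
  simp only [hval]
  have hterm : ∀ j : Fin B,
      ((if j = (0:Fin B) then N ^ 2 else 1) / (N ^ 2 + ((B:ℝ) - 1))) *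
        Real.log ((if j = (0:Fin B) then N ^ 2 else 1) / (N ^ 2 + ((B:ℝ) - 1))) =
      (1 / (N ^ 2 + ((B:ℝ) - 1))) * Real.log (1 / (N ^ 2 + ((B:ℝ) - 1))) +
        (if j = (0:Fin B) then
          (N ^ 2 / (N ^ 2 + ((B:ℝ) - 1))) * Real.log (N ^ 2 / (N ^ 2 + ((B:ℝ) - 1))) -
          (1 / (N ^ 2 + ((B:ℝ) - 1))) * Real.log (1 / (N ^ 2 + ((B:ℝ) - 1))) else 0) := by
    intro j; split_ifs <;> ring
  simp_rw [hterm]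
  rw [Finset.sum_add_distrib, Finset.sum_const,
    Finset.sum_ite_eq' Finset.univ (0:Fin B) _]
  simp only [Finset.mem_univ, if_true, Finset.card_univ, Fintype.card_fin, nsmul_eq_mul]
  have hlogT : Real.log (N ^ 2 + ((B:ℝ) - 1)) = Real.log (2 * D) + Real.log N := by
    rw [hkey, Real.log_mul (by positivity) hN0.ne']
  have h2 : Real.log (N ^ 2 / (N ^ 2 + ((B:ℝ) - 1)))
      = 2 * Real.log N - (Real.log (2 * D) + Real.log N) := by
    rw [Real.log_div (pow_ne_zero 2 hN0.ne') hT0.ne', Real.log_pow, hlogT]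
    push_cast; ring
  have h3 : Real.log (1 / (N ^ 2 + ((B:ℝ) - 1)))
      = -(Real.log (2 * D) + Real.log N) := by
    rw [one_div, Real.log_inv, hlogT]
  rw [h2, h3]
  field_simp
  ring

end
end

section
/- There exists a constant C > 0 such that for every integer B ≥ 2, every κ with 0 < κ < π/2, and either choice of sign, the Shannon entropy of x_± satisfies | s(x_±) − ( (1/2) log B + log 2 ) | ≤ C (log B)/√B. -/
/-!
Only the first coordinate `r` of `x_±` differs from `1`, so with `w = r²` and `S = w + B - 1`
the entropy is `log S - (w / S) log w`, while `w = B + O(√B)` because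
`r² - B = cos 2κ ± 2 cos κ √(B - sin² κ)`. Since `S ≈ 2B` and `w ≈ B`, the error
`s(x_±) - (½ log B + log 2)` equals `log (S / 2B) - (w / S) log (w / B) + (½ - w / S) log B`,
whose terms are `O(1/√B)`, `O(1/√B)` and `O(log B / √B)`. For small `B` the bounds
`0 ≤ s(x) ≤ log B` (Jensen for the concave `-t log t`) suffice.
-/

noncomputable section

open Real

section Entropy

variable {ι : Type*} [Fintype ι]

theorem shannonEnt_eq_sum_negMulLog (x : ι → ℂ) :
    shannonEnt x = ∑ j, negMulLog (‖x j‖ ^ 2 / ∑ i, ‖x i‖ ^ 2) := by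
  simp only [shannonEnt, negMulLog, neg_mul, Finset.sum_neg_distrib]

theorem shannonEnt_nonneg (x : ι → ℂ) : 0 ≤ shannonEnt x := by
  rw [shannonEnt_eq_sum_negMulLog]
  refine Finset.sum_nonneg fun j _ => negMulLog_nonneg (by positivity) ?_
  have hle : ‖x j‖ ^ 2 ≤ ∑ i, ‖x i‖ ^ 2 :=
    Finset.single_le_sum (f := fun i => ‖x i‖ ^ 2) (fun _ _ => by positivity)
      (Finset.mem_univ j)
  exact div_le_one_of_le₀ hle (by positivity)

theorem shannonEnt_le_log_card (x : ι → ℂ) : shannonEnt x ≤ log (Fintype.card ι) := by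
  set S := ∑ i, ‖x i‖ ^ 2
  rcases eq_or_ne S 0 with hS | hS
  · simp [shannonEnt_eq_sum_negMulLog, S, hS, log_natCast_nonneg]
  set N : ℝ := (Fintype.card ι : ℝ)
  have hN : 0 < N := by
    obtain ⟨i, -⟩ := Finset.exists_ne_zero_of_sum_ne_zero hS
    exact Nat.cast_pos.mpr (Fintype.card_pos_iff.mpr ⟨i⟩)
  have jensen := concaveOn_negMulLog.le_map_sum (t := Finset.univ)
    (w := fun _ => N⁻¹) (p := fun j => ‖x j‖ ^ 2 / S)
    (fun _ _ => by positivity) (by simp [N, hN.ne'])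
    (fun _ _ => Set.mem_Ici.mpr (by positivity))
  have hmean : ∑ j, N⁻¹ • (‖x j‖ ^ 2 / S) = N⁻¹ := by
    rw [← Finset.smul_sum, ← Finset.sum_div, div_self hS, smul_eq_mul, mul_one]
  have hinv : negMulLog N⁻¹ = N⁻¹ * log N := by
    simp only [negMulLog_def, log_inv]; ring
  rw [hmean, hinv, ← Finset.smul_sum, smul_eq_mul] at jensen
  rw [shannonEnt_eq_sum_negMulLog]
  exact le_of_mul_le_mul_left jensen (inv_pos.mpr hN)

theorem shannonEnt_eq_log_add_sum_negMulLog_div (x : ι → ℂ) (hx : ∑ i, ‖x i‖ ^ 2 ≠ 0) :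
    shannonEnt x =
      log (∑ i, ‖x i‖ ^ 2) + (∑ j, negMulLog (‖x j‖ ^ 2)) / ∑ i, ‖x i‖ ^ 2 := by
  set S := ∑ i, ‖x i‖ ^ 2
  have hterm (j : ι) : negMulLog (‖x j‖ ^ 2 / S) =
      negMulLog (‖x j‖ ^ 2) / S + ‖x j‖ ^ 2 / S * log S := by
    rw [div_eq_mul_inv, negMulLog_mul]
    simp only [negMulLog_def, log_inv]
    ring
  rw [shannonEnt_eq_sum_negMulLog, Finset.sum_congr rfl fun j _ => hterm j,
    Finset.sum_add_distrib, ← Finset.sum_mul, ← Finset.sum_div, ← Finset.sum_div, div_self hx,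
    one_mul, add_comm]

end Entropy

theorem shannonEnt_ite_zero {B : ℕ} (hB : 2 ≤ B) (r : ℝ) :
    shannonEnt (fun m : Fin B => if (m : ℕ) = 0 then (r : ℂ) else 1) =
      log (r ^ 2 + (B - 1)) + negMulLog (r ^ 2) / (r ^ 2 + (B - 1)) := by
  obtain ⟨n, rfl⟩ : ∃ n, B = n + 1 := ⟨B - 1, by omega⟩
  have hn : (1 : ℝ) ≤ n := by exact_mod_cast (by omega : 1 ≤ n)
  have hsum : ∑ i : Fin (n + 1), ‖if (i : ℕ) = 0 then (r : ℂ) else 1‖ ^ 2 =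
      r ^ 2 + ((n + 1 : ℕ) - 1 : ℝ) := by
    simp [Fin.sum_univ_succ, Complex.norm_real, sq_abs]
  have hS : r ^ 2 + ((n + 1 : ℕ) - 1 : ℝ) ≠ 0 := by push_cast; nlinarith [sq_nonneg r]
  rw [shannonEnt_eq_log_add_sum_negMulLog_div _ (hsum ▸ hS), hsum]
  simp [Fin.sum_univ_succ, Complex.norm_real, sq_abs]

theorem abs_log_le_two_mul_abs_sub_one {y : ℝ} (hy : 1 / 2 ≤ y) : |log y| ≤ 2 * |y - 1| := by
  have hy0 : 0 < y := by linarith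
  rw [abs_le]
  constructor
  · have hlow : -(2 * |y - 1|) ≤ 1 - y⁻¹ := by
      rw [show 1 - y⁻¹ = (y - 1) / y by field_simp, le_div_iff₀ hy0]
      cases abs_cases (y - 1) <;> nlinarith
    linarith [one_sub_inv_le_log_of_pos hy0]
  · linarith [log_le_sub_one_of_pos hy0, le_abs_self (y - 1), abs_nonneg (y - 1)]

theorem abs_sq_cos_add_mul_sqrt_sub_le {B κ ε : ℝ} (hB : 1 ≤ B) (hε : |ε| = 1) :
    |(cos κ + ε * √(B - sin κ ^ 2)) ^ 2 - B| ≤ 3 * √B := by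
  have hu2 : √(B - sin κ ^ 2) ^ 2 = B - sin κ ^ 2 := sq_sqrt (by nlinarith [sin_sq_le_one κ])
  have huB : √(B - sin κ ^ 2) ≤ √B := sqrt_le_sqrt (by nlinarith [sq_nonneg (sin κ)])
  have h1B : 1 ≤ √B := one_le_sqrt.mpr hB
  have hexpand : (cos κ + ε * √(B - sin κ ^ 2)) ^ 2 - B =
      (cos κ ^ 2 - sin κ ^ 2) + 2 * cos κ * (ε * √(B - sin κ ^ 2)) := by
    have hε2 : ε ^ 2 = 1 := by rw [← sq_abs, hε, one_pow]
    linear_combination (√(B - sin κ ^ 2) ^ 2) * hε2 + hu2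
  have hcs : |cos κ ^ 2 - sin κ ^ 2| ≤ 1 := by
    rw [abs_le]
    constructor <;> nlinarith [sin_sq_add_cos_sq κ, sq_nonneg (sin κ), sq_nonneg (cos κ)]
  have hcross : |2 * cos κ * (ε * √(B - sin κ ^ 2))| ≤ 2 * √B := by
    rw [abs_mul, abs_mul, abs_mul, hε, abs_of_nonneg (sqrt_nonneg _), abs_two]
    nlinarith [abs_cos_le_one κ, abs_nonneg (cos κ), sqrt_nonneg (B - sin κ ^ 2)]
  calc _ ≤ |cos κ ^ 2 - sin κ ^ 2| + |2 * cos κ * (ε * √(B - sin κ ^ 2))| := by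
        rw [hexpand]; exact abs_add_le _ _
    _ ≤ 3 * √B := by linarith

theorem abs_div_sq_le_of_abs_le {t c s : ℝ} (hs : 0 < s) (ht : |t| ≤ c * s) :
    |t / s ^ 2| ≤ c / s := by
  rw [abs_div, abs_of_pos (by positivity : (0 : ℝ) < s ^ 2), div_le_div_iff₀ (by positivity) hs]
  nlinarith

theorem abs_log_add_negMulLog_div_sub_le {B w : ℝ} (hB : 36 ≤ B) (hw : |w - B| ≤ 3 * √B) :
    |log (w + (B - 1)) + negMulLog w / (w + (B - 1)) - (1 / 2 * log B + log 2)| ≤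
      17 * log B / √B := by
  obtain ⟨s, hs, rfl⟩ : ∃ s, 6 ≤ s ∧ B = s ^ 2 :=
    ⟨√B, le_sqrt_of_sq_le (by linarith), (sq_sqrt (by linarith)).symm⟩
  rw [sqrt_sq (by linarith)] at hw ⊢
  obtain ⟨hw_lo, hw_hi⟩ := abs_le.mp hw
  have hw0 : 0 < w := by nlinarith
  have hB0 : 0 < s ^ 2 := by positivity
  generalize hS : w + (s ^ 2 - 1) = S
  have hSB : s ^ 2 ≤ S := by nlinarith
  have hS0 : 0 < S := by linarith
  have hdecomp : log S + negMulLog w / S - (1 / 2 * log (s ^ 2) + log 2) =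
      log (S / (2 * s ^ 2)) - w / S * log (w / s ^ 2) + (1 / 2 - w / S) * log (s ^ 2) := by
    rw [log_div hS0.ne' (by positivity), log_div hw0.ne' hB0.ne', log_mul two_ne_zero hB0.ne',
      negMulLog_def]
    field_simp
    ring
  have hS2B : |log (S / (2 * s ^ 2))| ≤ 4 / s := by
    have : |S / (2 * s ^ 2) - 1| ≤ 2 / s := by
      rw [show S / (2 * s ^ 2) - 1 = (S - 2 * s ^ 2) / 2 / s ^ 2 by field_simp]
      refine abs_div_sq_le_of_abs_le (by linarith) ?_
      rw [abs_div, abs_two, div_le_iff₀ two_pos, abs_le]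
      constructor <;> linarith
    calc |log (S / (2 * s ^ 2))| ≤ 2 * |S / (2 * s ^ 2) - 1| :=
          abs_log_le_two_mul_abs_sub_one (by rw [le_div_iff₀ (by positivity)]; linarith)
      _ ≤ 2 * (2 / s) := by gcongr
      _ = 4 / s := by ring
  have hwB : |w / S * log (w / s ^ 2)| ≤ 6 / s := by
    have : |w / s ^ 2 - 1| ≤ 3 / s := by
      rw [show w / s ^ 2 - 1 = (w - s ^ 2) / s ^ 2 by field_simp]
      exact abs_div_sq_le_of_abs_le (by linarith) hw
    have hlog := abs_log_le_two_mul_abs_sub_one (y := w / s ^ 2)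
      (by rw [le_div_iff₀ hB0]; nlinarith)
    have hwS : |w / S| ≤ 1 := by
      rw [abs_of_pos (by positivity), div_le_one hS0]; linarith
    calc |w / S * log (w / s ^ 2)| = |w / S| * |log (w / s ^ 2)| := abs_mul _ _
      _ ≤ 1 * (2 * (3 / s)) := by gcongr; exact hlog.trans (by gcongr)
      _ = 6 / s := by ring
  have hhalf : |1 / 2 - w / S| ≤ 2 / s := by
    have : |(S - 2 * w) / 2 / s ^ 2| ≤ 2 / s := by
      refine abs_div_sq_le_of_abs_le (by linarith) ?_
      rw [abs_div, abs_two, div_le_iff₀ two_pos, abs_le]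
      constructor <;> linarith
    calc |1 / 2 - w / S| = |(S - 2 * w) / 2 / S| := by congr 1; field_simp
      _ ≤ |(S - 2 * w) / 2 / s ^ 2| := by
        rw [abs_div, abs_div _ (s ^ 2), abs_of_pos hS0, abs_of_pos hB0]
        exact div_le_div_of_nonneg_left (abs_nonneg _) hB0 hSB
      _ ≤ 2 / s := this
  have hlogB : 0.6931471803 < log (s ^ 2) :=
    log_two_gt_d9.trans_le (log_le_log two_pos (by nlinarith))
  rw [hdecomp]
  calc _ ≤ |log (S / (2 * s ^ 2))| + |w / S * log (w / s ^ 2)|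
          + |(1 / 2 - w / S) * log (s ^ 2)| :=
        (abs_add_le _ _).trans (by gcongr; exact abs_sub _ _)
    _ = |log (S / (2 * s ^ 2))| + |w / S * log (w / s ^ 2)| + |1 / 2 - w / S| * log (s ^ 2) := by
        rw [abs_mul (1 / 2 - w / S), abs_of_pos (hlogB.trans' (by norm_num))]
    _ ≤ 4 / s + 6 / s + 2 / s * log (s ^ 2) := by gcongr
    _ = (10 + 2 * log (s ^ 2)) / s := by ring
    _ ≤ 17 * log (s ^ 2) / s := by gcongr; linarith

theorem abs_shannonEnt_sub_half_log_add_log_two_le {B : ℕ} (hB : 2 ≤ B) (x : Fin B → ℂ) :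
    |shannonEnt x - (1 / 2 * log B + log 2)| ≤ 3 / 2 * log B := by
  have hupper : shannonEnt x ≤ log B := by simpa using shannonEnt_le_log_card x
  have hlog2 : log 2 ≤ log B := log_le_log two_pos (by exact_mod_cast hB)
  rw [abs_le]
  constructor <;> linarith [shannonEnt_nonneg x, log_nonneg one_le_two]

/-- Uniformly in `κ ∈ (0, π/2)` and in the sign,
`s(x_±) = (1/2) log B + log 2 + O(log B / √B)`. -/
theorem shannon_entropy_xvec_asymptotic :
    ∃ C : ℝ, 0 < C ∧ ∀ B : ℕ, 2 ≤ B → ∀ κ : ℝ, 0 < κ → κ < Real.pi / 2 →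
      ∀ ε : ℝ, ε = 1 ∨ ε = -1 →
        |shannonEnt (xvec B κ ε) - ((1 / 2) * Real.log B + Real.log 2)| ≤
          C * Real.log B / Real.sqrt B := by
  refine ⟨17, by norm_num, fun B hB κ _ _ ε hε => ?_⟩
  have hlogB : 0 ≤ log B := log_natCast_nonneg B
  rcases lt_or_ge B 36 with hsmall | hlarge
  · have hsqrt : √B ≤ 6 :=
      sqrt_le_iff.mpr ⟨by norm_num, by norm_num; exact_mod_cast hsmall.le⟩
    calc _ ≤ 3 / 2 * log B := abs_shannonEnt_sub_half_log_add_log_two_le hB _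
      _ ≤ 17 * log B / √B := by
        rw [le_div_iff₀ (by positivity)]
        nlinarith
  · have hε : |ε| = 1 := by rcases hε with rfl | rfl <;> simp
    unfold xvec
    rw [shannonEnt_ite_zero hB]
    exact abs_log_add_negMulLog_div_sub_le (by exact_mod_cast hlarge)
      (abs_sq_cos_add_mul_sqrt_sub_le (by exact_mod_cast (by omega : 1 ≤ B)) hε)

end
end

section
/- Let B ≥ 5, let j be an integer with 2 ≤ j ≤ B and (if B is even) j ≠ B/2 + 1, let κ ∈ ℝ, and let F_j(κ) := P_j(κ)²·F_B. Then every eigenvalue λ of F_j(κ) with λ ∉ {1, −1, i, −i} satisfies the quartic equation λ⁴ − (λ³(e^{2iκ} − 1)/√B)·e^{2πi(j−1)²/B} − (λ(e^{2iκ} − 1)/√B)·e^{−2πi(j−1)²/B} − e^{2iκ} = 0. -/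
open Matrix

noncomputable section

/-- `P_j(κ)`: the diagonal matrix whose `j`-th (1-based) diagonal entry is
`e^{iκ}` and whose other diagonal entries are `1`. -/
def Pjmat (B j : ℕ) (κ : ℝ) : Matrix (Fin B) (Fin B) ℂ :=
  Matrix.diagonal fun m =>
    if (m : ℕ) = j - 1 then Complex.exp (Complex.I * κ) else 1

/-!
Since `F_B²` is the reversal `m ↦ -m`, `F_B⁴ = 1`. Put `c = e^{2iκ} - 1` and `α = (F_B x)_j`.
The eigenvalue equation `(1 + c e_j e_jᵀ) F_B x = λ x` says `(λ - F_B) x = c α e_j`;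
multiplying by `∑ₖ λᵏ F_B^{3-k}` gives `(λ⁴ - 1) x = c α ∑ₖ λᵏ F_B^{3-k} e_j`.
Hence `α ≠ 0` when `λ⁴ ≠ 1`, and the `j`-th entry of `F_B` applied to this identity is
`(λ⁴ - 1) α = c α ∑ₖ λᵏ (F_B^{4-k})_{jj}`. The quartic comes from
`(F_B)_{jj} = e^{2πi(j-1)²/B}/√B`, `(F_B²)_{jj} = 0` (as `2(j-1) ≢ 0 mod B`),
`(F_B³)_{jj} = (F_B)_{-j,j} = e^{-2πi(j-1)²/B}/√B` and `(F_B⁴)_{jj} = 1`.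
-/

open Finset Complex

section RankOnePerturbation

variable {K ι : Type*} [Field K] [Fintype ι] [DecidableEq ι]

theorem Matrix.pow_sub_one_smul_eq_of_sub_mulVec {F : Matrix ι ι K} {n : ℕ} (hF : F ^ n = 1)
    {lam : K} {x v : ι → K} (hv : lam • x - F *ᵥ x = v) :
    (lam ^ n - 1) • x = ∑ k ∈ range n, lam ^ k • (F ^ (n - 1 - k) *ᵥ v) := by
  have hgeom := congrArg (· *ᵥ x) (((Commute.one_left F).smul_left lam).geom_sum₂_mul n)
  simp only [← mulVec_mulVec, sub_mulVec, smul_mulVec, one_mulVec, hv, hF, smul_pow, one_pow,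
    sum_mulVec, smul_mul_assoc, one_mul] at hgeom
  rw [sub_smul, one_smul, ← hgeom]

theorem Matrix.eigenvalue_pow_sub_one_eq_of_diagonal_ite_mul {F : Matrix ι ι K} {n : ℕ}
    (hF : F ^ n = 1) (i : ι) (d : K) {lam : K} (hlam : lam ^ n ≠ 1) {x : ι → K} (hx0 : x ≠ 0)
    (hx : (diagonal (fun m => if m = i then d else 1) * F) *ᵥ x = lam • x) :
    lam ^ n - 1 = (d - 1) * ∑ k ∈ range n, lam ^ k * (F ^ (n - k)) i i := by
  set α := (F *ᵥ x) i
  have hv : lam • x - F *ᵥ x = ((d - 1) * α) • Pi.single i 1 := by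
    ext m
    have hm := congrFun hx m
    rw [← mulVec_mulVec, mulVec_diagonal] at hm
    by_cases h : m = i
    · subst h
      simp only [if_true, Pi.smul_apply, smul_eq_mul] at hm
      simp only [Pi.sub_apply, Pi.smul_apply, smul_eq_mul, Pi.single_eq_same, α]
      linear_combination -hm
    · simp only [h, if_false, one_mul, Pi.smul_apply, smul_eq_mul] at hm
      simp only [Pi.sub_apply, Pi.smul_apply, smul_eq_mul, hm, sub_self, Pi.single_eq_of_ne h,
        mul_zero]
  have hx_geom := pow_sub_one_smul_eq_of_sub_mulVec hF hv
  have hα : α ≠ 0 := by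
    rintro hα
    simp only [hα, mul_zero, zero_smul, mulVec_zero, smul_zero, sum_const_zero,
      smul_eq_zero] at hx_geom
    exact hx_geom.elim (fun h => hlam (sub_eq_zero.1 h)) hx0
  have hFkey := congrFun (congrArg (F *ᵥ ·) hx_geom) i
  simp only [mulVec_smul, Pi.smul_apply, smul_eq_mul, mulVec_sum, mulVec_mulVec] at hFkey
  have hsum :
      (∑ k ∈ range n, lam ^ k • ((d - 1) * α) • (F * F ^ (n - 1 - k)) *ᵥ Pi.single i 1) i
        = (d - 1) * α * ∑ k ∈ range n, lam ^ k * (F ^ (n - k)) i i := by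
    rw [Finset.mul_sum, Finset.sum_apply]
    refine sum_congr rfl fun k hk => ?_
    have hpow : F * F ^ (n - 1 - k) = F ^ (n - k) := by
      rw [← pow_succ']; congr 1; have := mem_range.1 hk; omega
    rw [hpow, smul_smul, Pi.smul_apply, mulVec_single_one, col_apply, smul_eq_mul]
    ring
  apply mul_right_cancel₀ hα
  linear_combination hFkey.trans hsum

end RankOnePerturbation

theorem IsPrimitiveRoot.geom_sum_pow_eq {K : Type*} [Field K] {ζ : K} {n : ℕ}
    (hζ : IsPrimitiveRoot ζ n) (a : ℕ) :
    ∑ k ∈ range n, (ζ ^ a) ^ k = if n ∣ a then (n : K) else 0 := by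
  split_ifs with ha
  · simp [(hζ.pow_eq_one_iff_dvd a).2 ha]
  · rw [geom_sum_eq (mt (hζ.pow_eq_one_iff_dvd a).1 ha), ← pow_mul, mul_comm, pow_mul,
      hζ.pow_eq_one, one_pow, sub_self, zero_div]

theorem Fin.neg_eq_iff_dvd_add {n : ℕ} [NeZero n] (a b : Fin n) :
    -a = b ↔ n ∣ (a : ℕ) + b := by
  rw [neg_eq_iff_add_eq_zero, Fin.ext_iff, Fin.val_add, Fin.val_zero, Nat.dvd_iff_mod_eq_zero]

theorem fourierMat_apply (B : ℕ) (m k : Fin B) :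
    fourierMat B m k = (Real.sqrt B : ℂ)⁻¹ * exp (2 * Real.pi * I / B) ^ ((m : ℕ) * k) := by
  rw [fourierMat, of_apply, ← exp_nat_mul]
  push_cast
  ring_nf

theorem fourierMat_mul_self (B : ℕ) [NeZero B] :
    fourierMat B * fourierMat B = (Equiv.neg (Fin B)).toPEquiv.toMatrix := by
  ext m l
  have hB : (B : ℂ) ≠ 0 := NeZero.ne _
  have hsqrt : ((Real.sqrt B : ℂ)⁻¹) ^ 2 = (B : ℂ)⁻¹ := by
    rw [inv_pow, ← ofReal_pow, Real.sq_sqrt B.cast_nonneg, ofReal_natCast]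
  calc (fourierMat B * fourierMat B) m l
      = (Real.sqrt B : ℂ)⁻¹ ^ 2 *
          ∑ k ∈ range B, (exp (2 * Real.pi * I / B) ^ ((m : ℕ) + l)) ^ k := by
        rw [mul_apply, ← Fin.sum_univ_eq_sum_range, Finset.mul_sum]
        refine sum_congr rfl fun k _ => ?_
        simp only [fourierMat_apply]
        ring
    _ = _ := by
        simp only [PEquiv.toMatrix_apply, Equiv.toPEquiv_apply, Option.mem_def, Option.some_inj,
          Equiv.neg_apply, Fin.neg_eq_iff_dvd_add]
        rw [(isPrimitiveRoot_exp B (NeZero.ne B)).geom_sum_pow_eq, hsqrt]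
        split_ifs <;> simp [hB]

theorem fourierMat_pow_four (B : ℕ) [NeZero B] : fourierMat B ^ 4 = 1 := by
  have hneg : (Equiv.neg (Fin B)).trans (Equiv.neg _) = Equiv.refl _ := Equiv.ext neg_neg
  rw [show 4 = 2 * 2 from rfl, pow_mul, sq (fourierMat B), fourierMat_mul_self, sq,
    ← PEquiv.toMatrix_trans, ← Equiv.toPEquiv_trans, hneg, Equiv.toPEquiv_refl,
    PEquiv.toMatrix_refl]

theorem fourierMat_apply_self (B : ℕ) (i : Fin B) :
    fourierMat B i i
      = (Real.sqrt B : ℂ)⁻¹ * exp (2 * Real.pi * I * ((i : ℕ) : ℂ) ^ 2 / B) := by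
  rw [fourierMat_apply, ← exp_nat_mul]
  push_cast
  ring_nf

theorem fourierMat_neg_apply_self (B : ℕ) [NeZero B] (i : Fin B) :
    fourierMat B (-i) i
      = (Real.sqrt B : ℂ)⁻¹ * exp (-(2 * Real.pi * I * ((i : ℕ) : ℂ) ^ 2 / B)) := by
  have hω := isPrimitiveRoot_exp B (NeZero.ne B)
  have hinv : exp (2 * Real.pi * I / B) ^ ((-i : Fin B) * (i : ℕ))
      = (exp (2 * Real.pi * I / B) ^ ((i : ℕ) * i))⁻¹ := by
    refine eq_inv_of_mul_eq_one_left ?_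
    rw [← pow_add, ← add_mul, add_comm, hω.pow_eq_one_iff_dvd]
    exact Dvd.dvd.mul_right ((Fin.neg_eq_iff_dvd_add i _).1 rfl) _
  rw [fourierMat_apply, hinv, ← exp_nat_mul, ← Complex.exp_neg]
  push_cast
  ring_nf

theorem fourierMat_sq_apply (B : ℕ) [NeZero B] (m k : Fin B) :
    (fourierMat B ^ 2) m k = if -m = k then 1 else 0 := by
  rw [sq, fourierMat_mul_self, PEquiv.toMatrix_apply, Equiv.toPEquiv_apply]
  simp only [Option.mem_def, Option.some_inj, Equiv.neg_apply]

theorem fourierMat_pow_three_apply (B : ℕ) [NeZero B] (m k : Fin B) :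
    (fourierMat B ^ 3) m k = fourierMat B (-m) k := by
  rw [pow_succ, sq, fourierMat_mul_self, PEquiv.toMatrix_toPEquiv_mul, submatrix_apply,
    Equiv.neg_apply, id]

theorem Complex.pow_four_eq_one_iff {z : ℂ} : z ^ 4 = 1 ↔ z ∈ ({1, -1, I, -I} : Set ℂ) := by
  have h : z ^ 4 - 1 = (z - 1) * (z + 1) * (z - I) * (z + I) := by
    linear_combination (z ^ 2 - 1) * I_sq
  simp only [← sub_eq_zero (a := z ^ 4), h, mul_eq_zero, sub_eq_zero, add_eq_zero_iff_eq_neg,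
    Set.mem_insert_iff, Set.mem_singleton_iff, or_assoc]

theorem Pjmat_mul_self (B j : ℕ) (κ : ℝ) (hj : j - 1 < B) :
    Pjmat B j κ * Pjmat B j κ
      = diagonal (fun m => if m = ⟨j - 1, hj⟩ then exp (2 * I * κ) else 1) := by
  rw [Pjmat, diagonal_mul_diagonal]
  congr 1
  ext m
  simp only [Fin.ext_iff]
  split_ifs
  · rw [← exp_add]; ring_nf
  · rw [one_mul]

theorem perturbed_fourier_quartic_general (B j : ℕ)
    (hj2 : 2 ≤ j) (hjB : j ≤ B) (hjhalf : Even B → j ≠ B / 2 + 1)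
    (κ : ℝ) :
    ∀ lam : ℂ, lam ∉ ({1, -1, Complex.I, -Complex.I} : Set ℂ) →
      (∃ x : Fin B → ℂ, x ≠ 0 ∧
        (Pjmat B j κ * Pjmat B j κ * fourierMat B).mulVec x = lam • x) →
      lam ^ 4 -
          lam ^ 3 * (Complex.exp (2 * Complex.I * κ) - 1) /
            (Real.sqrt B : ℂ) *
            Complex.exp (2 * Real.pi * Complex.I * ((j : ℂ) - 1) ^ 2 / B) -
          lam * (Complex.exp (2 * Complex.I * κ) - 1) / (Real.sqrt B : ℂ) *
            Complex.exp (-(2 * Real.pi * Complex.I * ((j : ℂ) - 1) ^ 2 / B)) -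
          Complex.exp (2 * Complex.I * κ) = 0 := by
  rintro lam hlam ⟨x, hx0, hx⟩
  have : NeZero B := ⟨by omega⟩
  set i : Fin B := ⟨j - 1, by omega⟩
  have hival : (i : ℕ) = j - 1 := rfl
  have hi : ((i : ℕ) : ℂ) = (j : ℂ) - 1 := by
    rw [hival, Nat.cast_sub (by omega), Nat.cast_one]
  have hii : -i ≠ i := by
    rw [Ne, Fin.neg_eq_iff_dvd_add]
    intro hdvd
    have h2 : (i : ℕ) + i = B := Nat.eq_of_dvd_of_lt_two_mul (by omega) hdvd (by omega)
    exact hjhalf ⟨i, h2.symm⟩ (by omega)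
  rw [Pjmat_mul_self B j κ (by omega)] at hx
  have hquartic := eigenvalue_pow_sub_one_eq_of_diagonal_ite_mul (fourierMat_pow_four B) i _
    (mt Complex.pow_four_eq_one_iff.1 hlam) hx0 hx
  simp only [sum_range_succ, sum_range_zero, Nat.reduceSub, pow_zero, pow_one, zero_add, one_mul,
    fourierMat_pow_four, one_apply_eq, fourierMat_pow_three_apply, fourierMat_neg_apply_self,
    fourierMat_sq_apply, if_neg hii, fourierMat_apply_self, hi] at hquartic
  linear_combination hquartic

/-- Any eigenvalue of `F_j(κ) = P_j(κ)² F_B` outside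
`{1, −1, i, −i}` is a root of the quartic
`λ⁴ − λ³ (e^{2iκ}−1) e^{2πi(j−1)²/B}/√B − λ (e^{2iκ}−1) e^{−2πi(j−1)²/B}/√B − e^{2iκ} = 0`. -/
theorem perturbed_fourier_quartic (B j : ℕ) (hB : 5 ≤ B)
    (hj2 : 2 ≤ j) (hjB : j ≤ B) (hjhalf : Even B → j ≠ B / 2 + 1)
    (κ : ℝ) :
    ∀ lam : ℂ, lam ∉ ({1, -1, Complex.I, -Complex.I} : Set ℂ) →
      (∃ x : Fin B → ℂ, x ≠ 0 ∧
        (Pjmat B j κ * Pjmat B j κ * fourierMat B).mulVec x = lam • x) →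
      lam ^ 4 -
          lam ^ 3 * (Complex.exp (2 * Complex.I * κ) - 1) /
            (Real.sqrt B : ℂ) *
            Complex.exp (2 * Real.pi * Complex.I * ((j : ℂ) - 1) ^ 2 / B) -
          lam * (Complex.exp (2 * Complex.I * κ) - 1) / (Real.sqrt B : ℂ) *
            Complex.exp (-(2 * Real.pi * Complex.I * ((j : ℂ) - 1) ^ 2 / B)) -
          Complex.exp (2 * Complex.I * κ) = 0 :=
  perturbed_fourier_quartic_general B j hj2 hjB hjhalf κ

end
end

section
/- Let B ≥ 2, let E be a B×B equi-transmitting matrix in standard form, let κ ∈ ℝ, and let P(κ) = diag(e^{iκ}, 1, …, 1). Let y_± ∈ ℂ^B be the vector whose first component is ±√(B−1) and whose remaining B−1 components all equal 1. Then P(κ)·E·P(κ)·y_± = ±e^{iκ}·y_±. Moreover, every eigenvector of P(κ)·E·P(κ) whose eigenvalue differs from both e^{iκ} and −e^{iκ} is an eigenvector of E; consequently, if +e^{iκ} (respectively −e^{iκ}) is not an eigenvalue of E, then it is a simple eigenvalue of P(κ)·E·P(κ) with eigenspace spanned by y_+ (respectively y_−). -/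
/-!
Write `e₀` for the first basis vector and `u = 1 - e₀`. The first row and column of `E` are
`r • u` with `r = 1/√(B-1)`, and unitarity turns this into `E u = √(B-1) e₀ = uᵀ E`: from both
sides `E` exchanges the lines through `e₀` and `u`, and so does `P E P`, with factors `e^{iκ} r`
and `e^{iκ} √(B-1)` whose product is `e^{2iκ}`. On the plane spanned by `e₀` and `u` this gives the
eigenvectors `y_± = ±√(B-1) e₀ + u` for `±e^{iκ}`. Dually, `P E P` exchanges the functionals
`x ↦ x₀` and `x ↦ u ⬝ x` up to the same factors, so an eigenvector for `μ ≠ ±e^{iκ}` is killed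
by both; on their common kernel `P` is the identity, hence `P E P x = E x`. The same argument
shows that an eigenvector for `±e^{iκ}` with vanishing first coordinate is an eigenvector of `E`,
which pins down the eigenspace when `±e^{iκ}` is not an eigenvalue of `E`.
-/

open Matrix

noncomputable section

/-- A `B × B` matrix is *equi-transmitting in standard form* if it is unitary,
has zero diagonal, all off-diagonal entries of absolute value `1/√(B-1)`,
and all off-diagonal entries in the first row and first column equal to
`1/√(B-1)`. -/
def IsEquiTransStd {B : ℕ} (E : Matrix (Fin B) (Fin B) ℂ) : Prop :=
  E ∈ Matrix.unitaryGroup (Fin B) ℂ ∧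
  (∀ i, E i i = 0) ∧
  (∀ i j, i ≠ j → ‖E i j‖ = 1 / Real.sqrt ((B : ℝ) - 1)) ∧
  (∀ i j : Fin B, ((i : ℕ) = 0 ∨ (j : ℕ) = 0) → i ≠ j →
    E i j = ((1 / Real.sqrt ((B : ℝ) - 1) : ℝ) : ℂ))

/-- The vector `y_±` (sign `ε = ±1`): first component `± √(B−1)`, all other
components `1`. -/
def yvec (B : ℕ) (ε : ℝ) : Fin B → ℂ := fun m =>
  if (m : ℕ) = 0 then ((ε * Real.sqrt ((B : ℝ) - 1) : ℝ) : ℂ) else 1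

section

variable {K ι : Type*} [Field K] [Fintype ι] [DecidableEq ι]

structure SwapsSingleCompl (A : Matrix ι ι K) (i₀ : ι) (r s : K) : Prop where
  mulVec_single : A *ᵥ Pi.single i₀ 1 = r • (1 - Pi.single i₀ 1)
  mulVec_compl : A *ᵥ (1 - Pi.single i₀ 1) = s • Pi.single i₀ 1
  single_vecMul : Pi.single i₀ 1 ᵥ* A = r • (1 - Pi.single i₀ 1)
  compl_vecMul : (1 - Pi.single i₀ 1) ᵥ* A = s • Pi.single i₀ 1

theorem diagonal_mulSingle_mulVec_of_apply_eq_zero {i₀ : ι} (c : K) {x : ι → K}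
    (hx : x i₀ = 0) : diagonal (Pi.mulSingle i₀ c) *ᵥ x = x := by
  ext j
  rw [mulVec_diagonal]
  by_cases hj : j = i₀
  · subst hj; simp [hx]
  · simp [hj]

theorem vecMul_diagonal_mulSingle_of_apply_eq_zero {i₀ : ι} (c : K) {x : ι → K}
    (hx : x i₀ = 0) : x ᵥ* diagonal (Pi.mulSingle i₀ c) = x := by
  ext j
  rw [vecMul_diagonal]
  by_cases hj : j = i₀
  · subst hj; simp [hx]
  · simp [hj]

namespace SwapsSingleCompl

variable {A : Matrix ι ι K} {i₀ : ι} {r s : K}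

theorem mulVec_apply (h : SwapsSingleCompl A i₀ r s) (x : ι → K) :
    (A *ᵥ x) i₀ = r * ((1 - Pi.single i₀ 1) ⬝ᵥ x) := by
  rw [← single_one_dotProduct i₀ (A *ᵥ x), dotProduct_mulVec, h.single_vecMul, smul_dotProduct,
    smul_eq_mul]

theorem compl_dotProduct_mulVec (h : SwapsSingleCompl A i₀ r s) (x : ι → K) :
    (1 - Pi.single i₀ 1) ⬝ᵥ (A *ᵥ x) = s * x i₀ := by
  rw [dotProduct_mulVec, h.compl_vecMul, smul_dotProduct, single_one_dotProduct, smul_eq_mul]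

theorem mulVec_smul_single_add_compl (h : SwapsSingleCompl A i₀ r s) {t : K}
    (ht : r * t ^ 2 = s) :
    A *ᵥ (t • Pi.single i₀ 1 + (1 - Pi.single i₀ 1)) =
      (r * t) • (t • Pi.single i₀ 1 + (1 - Pi.single i₀ 1)) := by
  rw [mulVec_add, mulVec_smul, h.mulVec_single, h.mulVec_compl, ← ht]
  module

theorem apply_eq_zero_of_mulVec_eq_smul (h : SwapsSingleCompl A i₀ r s) {x : ι → K} {μ : K}
    (hx : A *ᵥ x = μ • x) (hμ : μ ^ 2 ≠ r * s) : x i₀ = 0 := by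
  have h₁ := h.mulVec_apply x
  have h₂ := h.compl_dotProduct_mulVec x
  rw [hx, Pi.smul_apply, smul_eq_mul] at h₁
  rw [hx, dotProduct_smul, smul_eq_mul] at h₂
  have : (μ ^ 2 - r * s) * x i₀ = 0 := by linear_combination μ * h₁ + r * h₂
  exact (mul_eq_zero.mp this).resolve_left (sub_ne_zero.mpr hμ)

theorem compl_dotProduct_eq_zero (h : SwapsSingleCompl A i₀ r s) (hr : r ≠ 0) {x : ι → K}
    {μ : K} (hx : A *ᵥ x = μ • x) (hx₀ : x i₀ = 0) : (1 - Pi.single i₀ 1) ⬝ᵥ x = 0 := by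
  have h₁ := h.mulVec_apply x
  rw [hx, Pi.smul_apply, hx₀, smul_zero] at h₁
  exact (mul_eq_zero.mp h₁.symm).resolve_left hr

theorem diagonal_mul_mul_diagonal (h : SwapsSingleCompl A i₀ r s) (c : K) :
    SwapsSingleCompl (diagonal (Pi.mulSingle i₀ c) * A * diagonal (Pi.mulSingle i₀ c)) i₀
      (c * r) (c * s) := by
  have hcompl : (1 - Pi.single i₀ 1 : ι → K) i₀ = 0 := by simp
  have hDe : diagonal (Pi.mulSingle i₀ c) *ᵥ Pi.single i₀ 1 = c • Pi.single i₀ 1 := by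
    rw [diagonal_mulVec_single, Pi.mulSingle_eq_same, ← smul_eq_mul, Pi.single_smul]
  have heD : Pi.single i₀ 1 ᵥ* diagonal (Pi.mulSingle i₀ c) = c • Pi.single i₀ 1 := by
    rw [single_vecMul_diagonal, Pi.mulSingle_eq_same, one_mul, ← Pi.single_smul, smul_eq_mul,
      mul_one]
  have hDu := diagonal_mulSingle_mulVec_of_apply_eq_zero c hcompl
  have huD := vecMul_diagonal_mulSingle_of_apply_eq_zero c hcompl
  constructor
  · rw [← mulVec_mulVec, ← mulVec_mulVec, hDe, mulVec_smul, mulVec_smul, h.mulVec_single,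
      mulVec_smul, hDu, smul_smul]
  · rw [← mulVec_mulVec, ← mulVec_mulVec, hDu, h.mulVec_compl, mulVec_smul, hDe, smul_smul,
      mul_comm]
  · rw [← vecMul_vecMul, ← vecMul_vecMul, heD, smul_vecMul, smul_vecMul, h.single_vecMul,
      smul_vecMul, huD, smul_smul]
  · rw [← vecMul_vecMul, ← vecMul_vecMul, huD, h.compl_vecMul, smul_vecMul, heD, smul_smul,
      mul_comm]

theorem diagonal_mul_mul_diagonal_mulVec (h : SwapsSingleCompl A i₀ r s) (c : K) {x : ι → K}
    (hx₀ : x i₀ = 0) (hx : (1 - Pi.single i₀ 1) ⬝ᵥ x = 0) :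
    (diagonal (Pi.mulSingle i₀ c) * A * diagonal (Pi.mulSingle i₀ c)) *ᵥ x = A *ᵥ x := by
  rw [← mulVec_mulVec, ← mulVec_mulVec, diagonal_mulSingle_mulVec_of_apply_eq_zero c hx₀,
    diagonal_mulSingle_mulVec_of_apply_eq_zero c (by rw [h.mulVec_apply, hx, mul_zero])]

end SwapsSingleCompl

end

theorem swapsSingleCompl_of_mem_unitaryGroup {K ι : Type*} [Field K] [StarRing K] [Fintype ι]
    [DecidableEq ι] {U : Matrix ι ι K} (hU : U ∈ unitaryGroup ι K) {i₀ : ι} {r : K} (hr : r ≠ 0)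
    (hr_star : star r = r) (hcol : U *ᵥ Pi.single i₀ 1 = r • (1 - Pi.single i₀ 1))
    (hrow : Pi.single i₀ 1 ᵥ* U = r • (1 - Pi.single i₀ 1)) :
    SwapsSingleCompl U i₀ r r⁻¹ := by
  have hsingle : star (Pi.single i₀ 1 : ι → K) = Pi.single i₀ 1 := by
    rw [← Pi.single_star, star_one]
  have hcompl : star (r • (1 - Pi.single i₀ 1) : ι → K) = r • (1 - Pi.single i₀ 1) := by
    rw [star_smul, star_sub, star_one, hsingle, hr_star]
  -- `hrow` and `hcol` say `Uᴴ *ᵥ e₀ = r • (1 - e₀) = e₀ ᵥ* Uᴴ`; now apply `U` on each side.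
  refine ⟨hcol, ?_, hrow, ?_⟩
  · have h : U *ᵥ (r • (1 - Pi.single i₀ 1)) = Pi.single i₀ 1 := by
      rw [← hcompl, ← hrow, star_vecMul, hsingle, mulVec_mulVec, ← star_eq_conjTranspose,
        mem_unitaryGroup_iff.mp hU, one_mulVec]
    exact (eq_inv_smul_iff₀ hr).mpr (by rwa [mulVec_smul] at h)
  · have h : (r • (1 - Pi.single i₀ 1)) ᵥ* U = Pi.single i₀ 1 := by
      rw [← hcompl, ← hcol, star_mulVec, hsingle, vecMul_vecMul, ← star_eq_conjTranspose,
        mem_unitaryGroup_iff'.mp hU, vecMul_one]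
    exact (eq_inv_smul_iff₀ hr).mpr (by rwa [smul_vecMul] at h)

theorem Submodule.eq_span_singleton_of_mem_of_apply_ne_zero {K ι : Type*} [Field K]
    {V : Submodule K (ι → K)} {y : ι → K} {i : ι} (hy : y ∈ V) (hyi : y i ≠ 0)
    (hV : ∀ x ∈ V, x i = 0 → x = 0) : V = K ∙ y := by
  refine le_antisymm (fun x hx => ?_) ((span_singleton_le_iff_mem y V).mpr hy)
  have hxy : x - (x i / y i) • y = 0 :=
    hV _ (V.sub_mem hx (V.smul_mem _ hy)) (by simp [div_mul_cancel₀ _ hyi])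
  exact mem_span_singleton.mpr ⟨x i / y i, (sub_eq_zero.mp hxy).symm⟩

section EquiTransmitting

theorem ofReal_sqrt_sub_one_ne_zero {B : ℕ} (hB : 2 ≤ B) :
    ((√((B : ℝ) - 1) : ℝ) : ℂ) ≠ 0 := by
  have : (2 : ℝ) ≤ B := by exact_mod_cast hB
  exact Complex.ofReal_ne_zero.mpr (Real.sqrt_ne_zero'.mpr (by linarith))

variable {B : ℕ} [NeZero B]

theorem pmat_eq_diagonal_mulSingle (κ : ℝ) :
    Pmat B κ = diagonal (Pi.mulSingle 0 (Complex.exp (Complex.I * κ))) := by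
  unfold Pmat
  congr 1
  ext m
  simp [Pi.mulSingle_apply, Fin.val_eq_zero_iff]

theorem yvec_eq_smul_single_add_compl (ε : ℝ) :
    yvec B ε = ((ε : ℂ) * (√((B : ℝ) - 1) : ℂ)) • Pi.single 0 1 + (1 - Pi.single 0 1) := by
  ext m
  by_cases hm : m = 0
  · subst hm; simp [yvec]
  · simp [yvec, hm, Fin.val_eq_zero_iff]

namespace IsEquiTransStd

variable {E : Matrix (Fin B) (Fin B) ℂ}

theorem mulVec_single_zero (hE : IsEquiTransStd E) :
    E *ᵥ Pi.single 0 1 = ((1 / √((B : ℝ) - 1) : ℝ) : ℂ) • (1 - Pi.single 0 1) := by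
  obtain ⟨-, hdiag, -, hfirst⟩ := hE
  ext m
  rw [mulVec_single_one]
  by_cases hm : m = 0
  · subst hm; simp [hdiag]
  · simp [hm, hfirst m 0 (Or.inr rfl) hm]

theorem single_zero_vecMul (hE : IsEquiTransStd E) :
    Pi.single 0 1 ᵥ* E = ((1 / √((B : ℝ) - 1) : ℝ) : ℂ) • (1 - Pi.single 0 1) := by
  obtain ⟨-, hdiag, -, hfirst⟩ := hE
  ext n
  rw [single_one_vecMul]
  by_cases hn : n = 0
  · subst hn; simp [hdiag]
  · simp [hn, hfirst 0 n (Or.inl rfl) (Ne.symm hn)]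

theorem swapsSingleCompl (hE : IsEquiTransStd E) (hB : 2 ≤ B) :
    SwapsSingleCompl E 0 ((√((B : ℝ) - 1) : ℂ))⁻¹ (√((B : ℝ) - 1) : ℂ) := by
  have h := swapsSingleCompl_of_mem_unitaryGroup hE.1
    (inv_ne_zero (ofReal_sqrt_sub_one_ne_zero hB))
    (by rw [star_inv₀, Complex.star_def, Complex.conj_ofReal])
    (by simpa using hE.mulVec_single_zero) (by simpa using hE.single_zero_vecMul)
  rwa [inv_inv] at h

theorem swapsSingleCompl_pmat_mul_mul_pmat (hE : IsEquiTransStd E) (hB : 2 ≤ B) (κ : ℝ) :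
    SwapsSingleCompl (Pmat B κ * E * Pmat B κ) 0
      (Complex.exp (Complex.I * κ) * (√((B : ℝ) - 1) : ℂ)⁻¹)
      (Complex.exp (Complex.I * κ) * (√((B : ℝ) - 1) : ℂ)) := by
  rw [pmat_eq_diagonal_mulSingle]
  exact (hE.swapsSingleCompl hB).diagonal_mul_mul_diagonal _

theorem pmat_mul_mul_pmat_mulVec_yvec (hE : IsEquiTransStd E) (hB : 2 ≤ B) (κ : ℝ) {ε : ℝ}
    (hε : ε = 1 ∨ ε = -1) :
    (Pmat B κ * E * Pmat B κ) *ᵥ yvec B ε =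
      ((ε : ℂ) * Complex.exp (Complex.I * κ)) • yvec B ε := by
  have hs := ofReal_sqrt_sub_one_ne_zero hB
  have hε2 : (ε : ℂ) ^ 2 = 1 := by rcases hε with rfl | rfl <;> norm_num
  rw [yvec_eq_smul_single_add_compl]
  convert (hE.swapsSingleCompl_pmat_mul_mul_pmat hB κ).mulVec_smul_single_add_compl _ using 2
  · field_simp
  · rw [mul_pow, hε2]
    field_simp

theorem mulVec_eq_smul_of_pmat_mul_mul_pmat_mulVec_eq_smul (hE : IsEquiTransStd E) (hB : 2 ≤ B)
    (κ : ℝ) {x : Fin B → ℂ} {μ : ℂ} (hx : (Pmat B κ * E * Pmat B κ) *ᵥ x = μ • x)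
    (hx₀ : x 0 = 0) : E *ᵥ x = μ • x := by
  have hS := (hE.swapsSingleCompl_pmat_mul_mul_pmat hB κ).compl_dotProduct_eq_zero
    (mul_ne_zero (Complex.exp_ne_zero _) (inv_ne_zero (ofReal_sqrt_sub_one_ne_zero hB))) hx hx₀
  rwa [← (hE.swapsSingleCompl hB).diagonal_mul_mul_diagonal_mulVec _ hx₀ hS,
    ← pmat_eq_diagonal_mulSingle]

end IsEquiTransStd

end EquiTransmitting

/-- `y_±` are eigenvectors of `P(κ) E P(κ)` with eigenvalues
`± e^{iκ}`; every other eigenvector of `P(κ) E P(κ)` is an eigenvector of `E`;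
and if `± e^{iκ}` is not an eigenvalue of `E` then it is a simple eigenvalue
of `P(κ) E P(κ)` with eigenspace spanned by `y_±`. -/
theorem equitransmitting_perturbed_eigenvectors (B : ℕ) (hB : 2 ≤ B)
    (E : Matrix (Fin B) (Fin B) ℂ) (hE : IsEquiTransStd E) (κ : ℝ) :
    (∀ ε : ℝ, ε = 1 ∨ ε = -1 →
      (Pmat B κ * E * Pmat B κ).mulVec (yvec B ε) =
        ((ε : ℂ) * Complex.exp (Complex.I * κ)) • yvec B ε) ∧
    (∀ (x : Fin B → ℂ) (μ : ℂ), x ≠ 0 →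
      (Pmat B κ * E * Pmat B κ).mulVec x = μ • x →
      μ ≠ Complex.exp (Complex.I * κ) → μ ≠ -Complex.exp (Complex.I * κ) →
      ∃ c : ℂ, E.mulVec x = c • x) ∧
    (∀ ε : ℝ, ε = 1 ∨ ε = -1 →
      (¬ ∃ x : Fin B → ℂ, x ≠ 0 ∧
          E.mulVec x = ((ε : ℂ) * Complex.exp (Complex.I * κ)) • x) →
      Module.End.eigenspace (Pmat B κ * E * Pmat B κ).mulVecLin
          ((ε : ℂ) * Complex.exp (Complex.I * κ)) =
        Submodule.span ℂ {yvec B ε} ∧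
      Module.finrank ℂ
        (Module.End.eigenspace (Pmat B κ * E * Pmat B κ).mulVecLin
          ((ε : ℂ) * Complex.exp (Complex.I * κ))) = 1) := by
  have : NeZero B := ⟨by omega⟩
  have hM := hE.swapsSingleCompl_pmat_mul_mul_pmat hB κ
  refine ⟨fun ε hε => hE.pmat_mul_mul_pmat_mulVec_yvec hB κ hε,
    fun x μ _ hx hμ₁ hμ₂ => ⟨μ, hE.mulVec_eq_smul_of_pmat_mul_mul_pmat_mulVec_eq_smul hB κ hx ?_⟩,
    fun ε hε hno => ?_⟩
  · refine hM.apply_eq_zero_of_mulVec_eq_smul hx fun h => ?_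
    rw [mul_mul_mul_comm, inv_mul_cancel₀ (ofReal_sqrt_sub_one_ne_zero hB), mul_one, ← sq] at h
    rcases sq_eq_sq_iff_eq_or_eq_neg.mp h with h | h
    exacts [hμ₁ h, hμ₂ h]
  · have hy₀ : yvec B ε 0 ≠ 0 := by
      rcases hε with rfl | rfl <;>
        simp [yvec_eq_smul_single_add_compl, ofReal_sqrt_sub_one_ne_zero hB]
    have hspan := Submodule.eq_span_singleton_of_mem_of_apply_ne_zero
      (Module.End.mem_eigenspace_iff (f := (Pmat B κ * E * Pmat B κ).mulVecLin).mpr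
        (hE.pmat_mul_mul_pmat_mulVec_yvec hB κ hε)) hy₀
      fun x hx hx₀ => by
        by_contra hne
        exact hno ⟨x, hne, hE.mulVec_eq_smul_of_pmat_mul_mul_pmat_mulVec_eq_smul hB κ
          (Module.End.mem_eigenspace_iff.mp hx) hx₀⟩
    refine ⟨hspan, ?_⟩
    rw [hspan]
    exact finrank_span_singleton fun h => hy₀ (by simp [h])

end
end

section
/- Let B ≥ 2 and let y_± ∈ ℂ^B be the vector whose first component is ±√(B−1) and whose remaining B−1 components all equal 1. Then s(y_±) = (1/2)·log(B−1) + log 2, and r_∞(y_±) + r_{−1/2}(y_±) = log(B−1) + 2·log(1 + (B−1)^{−1/2}). -/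
noncomputable section

/-- The `ρ = ∞` Rényi entropy: `−log max_j |x_j|²/‖x‖²`. -/
def renyiEntInf {n : Type*} [Fintype n] (x : n → ℂ) : ℝ :=
  -Real.log (⨆ j, ‖x j‖ ^ 2 / ∑ i, ‖x i‖ ^ 2)

/-! The normalized weights `|y_j|² / ‖y‖²` of `y_±` are `1/2` at `j = 0` and `1/(2(B−1))` at the
other `B − 1` coordinates, so each entropy collapses to an explicit two-term expression in `B − 1`. -/

open Real

theorem log_add_two_mul_log_one_add_inv_sqrt {a : ℝ} (ha : 0 < a) :
    log a + 2 * log (1 + (√a)⁻¹) = 2 * log (1 + √a) := by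
  have hs : 0 < √a := sqrt_pos.mpr ha
  rw [show 1 + (√a)⁻¹ = (1 + √a) / √a by field_simp; ring, log_div (by positivity) hs.ne',
    log_sqrt ha.le]
  ring

theorem Fin.sum_comp_ite_val_eq_zero {α M : Type*} [AddCommMonoid M] (m : ℕ) (g : α → M)
    (c d : α) : ∑ j : Fin (m + 1), g (if (j : ℕ) = 0 then c else d) = g c + m • g d := by
  simp [Fin.sum_univ_succ]

theorem norm_sq_yvec {B : ℕ} {ε : ℝ} (hε : ε ^ 2 = 1) (j : Fin B) :
    ‖yvec B ε j‖ ^ 2 = if (j : ℕ) = 0 then (B : ℝ) - 1 else 1 := by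
  have hB : (1 : ℝ) ≤ B := by exact_mod_cast j.pos
  split_ifs with hj
  · simp only [yvec, if_pos hj, Complex.norm_real, norm_mul, mul_pow, norm_eq_abs, sq_abs, hε,
      one_mul]
    exact sq_sqrt (by linarith)
  · simp [yvec, hj]

theorem sum_norm_sq_yvec (m : ℕ) {ε : ℝ} (hε : ε ^ 2 = 1) :
    ∑ i, ‖yvec (m + 1) ε i‖ ^ 2 = 2 * m := by
  simp only [norm_sq_yvec hε]
  rw [Fin.sum_comp_ite_val_eq_zero m (fun p : ℝ => p), nsmul_eq_mul]
  push_cast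
  ring

theorem norm_sq_div_sum_yvec {m : ℕ} (hm : m ≠ 0) {ε : ℝ} (hε : ε ^ 2 = 1) (j : Fin (m + 1)) :
    ‖yvec (m + 1) ε j‖ ^ 2 / ∑ i, ‖yvec (m + 1) ε i‖ ^ 2 =
      if (j : ℕ) = 0 then 1 / 2 else (2 * m : ℝ)⁻¹ := by
  have hm' : (m : ℝ) ≠ 0 := by exact_mod_cast hm
  rw [sum_norm_sq_yvec m hε, norm_sq_yvec hε]
  split_ifs
  · push_cast
    rw [add_sub_cancel_right]
    field_simp
  · rw [one_div]

theorem shannonEnt_yvec {m : ℕ} (hm : m ≠ 0) {ε : ℝ} (hε : ε ^ 2 = 1) :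
    shannonEnt (yvec (m + 1) ε) = 1 / 2 * log m + log 2 := by
  have hm' : (m : ℝ) ≠ 0 := by exact_mod_cast hm
  simp only [shannonEnt, norm_sq_div_sum_yvec hm hε]
  rw [Fin.sum_comp_ite_val_eq_zero m (fun p => p * log p), nsmul_eq_mul, one_div,
    log_inv, log_inv, log_mul two_ne_zero hm']
  field_simp
  ring

theorem renyiEntInf_yvec {m : ℕ} (hm : m ≠ 0) {ε : ℝ} (hε : ε ^ 2 = 1) :
    renyiEntInf (yvec (m + 1) ε) = log 2 := by
  have hm' : (1 : ℝ) ≤ m := by exact_mod_cast Nat.one_le_iff_ne_zero.mpr hm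
  have hmax : (⨆ j, ‖yvec (m + 1) ε j‖ ^ 2 / ∑ i, ‖yvec (m + 1) ε i‖ ^ 2) = 1 / 2 := by
    simp only [norm_sq_div_sum_yvec hm hε]
    refine le_antisymm (ciSup_le fun j => ?_) (le_ciSup_of_le (Finite.bddAbove_range _) 0 ?_)
    · split_ifs
      · rfl
      · rw [one_div]
        exact inv_anti₀ two_pos (by linarith)
    · simp
  rw [renyiEntInf, hmax, one_div, log_inv, neg_neg]

theorem renyiEnt_neg_half_yvec {m : ℕ} (hm : m ≠ 0) {ε : ℝ} (hε : ε ^ 2 = 1) :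
    renyiEnt (-(1 / 2)) (yvec (m + 1) ε) = 2 * log (1 + √m) - log 2 := by
  have hm' : (0 : ℝ) < m := by exact_mod_cast Nat.pos_of_ne_zero hm
  have hsum : ((1 : ℝ) / 2) ^ (1 / 2 : ℝ) + m * ((2 * m : ℝ)⁻¹) ^ (1 / 2 : ℝ) =
      (1 + √m) / √2 := by
    rw [← sqrt_eq_rpow, ← sqrt_eq_rpow, sqrt_inv, sqrt_mul zero_le_two, one_div, sqrt_inv]
    have : √(m : ℝ) ≠ 0 := by positivity
    field_simp
    rw [mul_add, mul_one, mul_self_sqrt hm'.le]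
  simp only [renyiEnt, norm_sq_div_sum_yvec hm hε]
  rw [show (1 : ℝ) + -(1 / 2) = 1 / 2 by norm_num,
    Fin.sum_comp_ite_val_eq_zero m (· ^ (1 / 2 : ℝ)), nsmul_eq_mul, hsum,
    log_div (by positivity) (by positivity), log_sqrt zero_le_two]
  ring

/-- Entropies of `y_±`:
`s(y_±) = (1/2) log(B−1) + log 2` and
`r_∞(y_±) + r_{−1/2}(y_±) = log(B−1) + 2 log(1 + (B−1)^{−1/2})`. -/
theorem entropies_yvec (B : ℕ) (hB : 2 ≤ B)
    (ε : ℝ) (hε : ε = 1 ∨ ε = -1) :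
    shannonEnt (yvec B ε) = (1 / 2) * Real.log ((B : ℝ) - 1) + Real.log 2 ∧
    renyiEntInf (yvec B ε) + renyiEnt (-(1 / 2)) (yvec B ε) =
      Real.log ((B : ℝ) - 1) +
        2 * Real.log (1 + (Real.sqrt ((B : ℝ) - 1))⁻¹) := by
  obtain ⟨m, rfl⟩ : ∃ m, B = m + 1 := ⟨B - 1, by omega⟩
  have hm : m ≠ 0 := by omega
  have hε2 : ε ^ 2 = 1 := by rcases hε with rfl | rfl <;> norm_num
  have hcast : ((m + 1 : ℕ) : ℝ) - 1 = m := by push_cast; ring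
  rw [hcast, shannonEnt_yvec hm hε2, renyiEntInf_yvec hm hε2, renyiEnt_neg_half_yvec hm hε2,
    log_add_two_mul_log_one_add_inv_sqrt (by exact_mod_cast Nat.pos_of_ne_zero hm)]
  exact ⟨rfl, by ring⟩

end
end

section
/- Let a > 0 and let b be a real number with 0 < |b| < a, and let α, β ∈ ℝ. Then ∫₀^{2π} (α + β·cos x)·log(a + b·cos x) dx = 2πα·log( (a + √(a² − b²))/2 ) + 2πβ·(a − √(a² − b²))/b. Moreover, in the boundary case b = a one has ∫₀^{2π} (a + a·cos x)·log(a + a·cos x) dx = 2πa·(1 + log(a/2)); in particular ∫₀^{2π} cos²y·log(cos²y) dy = π·(1 − 2·log 2). -/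
/-!
Put `s = √(a² - b²)` and `r = b / (a + s)`. Then `|r| < 1` and
`a + b cos x = (a + s)/2 · (1 + 2 r cos x + r²)`, where `1 + 2 r cos x + r² = ‖e^{ix} + r‖²`.
So everything reduces to `∫ log (1 + 2 r cos x + r²) = 0`, which says that the circle average of
`log ‖· + r‖` is `log⁺ |r| = 0`, and to `∫ cos x · log (1 + 2 r cos x + r²) = 2πr`.
Integration by parts turns the latter into `∫ sin² x / (1 + 2 r cos x + r²) = π`. As the Poisson
kernel at `-r` is `(1 - r²) / (1 + 2 r cos x + r²)`, this is the Poisson integral formula for the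
harmonic function `Re ((1 - z²)/2)`, whose boundary values are `sin² x`.

The case `b = a` is the limit `b → a⁻`: since `t ↦ t log t` is continuous at `0`, the integrand
`(a + b cos x) log (a + b cos x)` is jointly continuous in `(b, x)`. The last identity is the
case `a = 1/2` after the substitution `x = 2y`.
-/

open Real intervalIntegral Filter Topology
open scoped Complex

theorem norm_exp_mul_I_add_ofReal_sq (r x : ℝ) :
    ‖cexp (x * Complex.I) + r‖ ^ 2 = 1 + 2 * r * cos x + r ^ 2 := by
  rw [Complex.sq_norm, Complex.normSq_apply, Complex.exp_mul_I]
  simp only [Complex.add_re, Complex.add_im, Complex.ofReal_re, Complex.ofReal_im,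
    Complex.mul_re, Complex.mul_im, Complex.I_re, Complex.I_im, Complex.cos_ofReal_re,
    Complex.sin_ofReal_re, Complex.cos_ofReal_im, Complex.sin_ofReal_im]
  linear_combination sin_sq_add_cos_sq x

theorem one_add_two_mul_cos_add_sq_pos {r : ℝ} (hr : |r| < 1) (x : ℝ) :
    0 < 1 + 2 * r * cos x + r ^ 2 := by
  have h : |r * cos x| ≤ |r| := by
    rw [abs_mul]; exact mul_le_of_le_one_right (abs_nonneg r) (abs_cos_le_one x)
  nlinarith [neg_abs_le (r * cos x), sq_abs r, abs_nonneg r]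

theorem circleAverage_zero_one_eq_integral {E : Type*} [NormedAddCommGroup E] [NormedSpace ℝ E]
    (f : ℂ → E) :
    circleAverage f 0 1 = (2 * π)⁻¹ • ∫ x in 0..2 * π, f (cexp (x * Complex.I)) := by
  simp [circleAverage, circleMap]

theorem integral_log_one_add_two_mul_cos_add_sq {r : ℝ} (hr : |r| ≤ 1) :
    ∫ x in 0..2 * π, log (1 + 2 * r * cos x + r ^ 2) = 0 := by
  have h := circleAverage_log_norm_add_const_eq_posLog (a := (r : ℂ))
  rw [(posLog_eq_zero_iff _).2 (by simpa using hr), circleAverage_zero_one_eq_integral] at h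
  simp_rw [← norm_exp_mul_I_add_ofReal_sq, log_pow, Nat.cast_ofNat, integral_const_mul]
  simpa [pi_ne_zero] using h

theorem poissonKernel_exp_mul_I (r x : ℝ) :
    poissonKernel 0 (-r) (cexp (x * Complex.I)) = (1 - r ^ 2) / (1 + 2 * r * cos x + r ^ 2) := by
  simp only [poissonKernel_def, sub_zero, sub_neg_eq_add, Complex.norm_exp_ofReal_mul_I,
    norm_neg, Complex.norm_real, norm_eq_abs, one_pow, sq_abs, norm_exp_mul_I_add_ofReal_sq]

theorem integral_sin_sq_div_one_add_two_mul_cos_add_sq {r : ℝ} (hr : |r| < 1) :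
    ∫ x in 0..2 * π, sin x ^ 2 / (1 + 2 * r * cos x + r ^ 2) = π := by
  set f : ℂ → ℝ := fun z ↦ ((1 - z ^ 2) / 2).re
  have hf : InnerProductSpace.HarmonicOnNhd f (Metric.closedBall 0 1) :=
    fun z _ ↦ (by fun_prop : AnalyticAt ℂ (fun z : ℂ ↦ (1 - z ^ 2) / 2) z).harmonicAt_re
  have hf_circle (x : ℝ) : f (cexp (x * Complex.I)) = sin x ^ 2 := by
    simp [f, ← Complex.exp_nat_mul, Complex.exp_re, sin_sq_eq_half_sub]
    ring
  have hf_center : f (-r) = (1 - r ^ 2) / 2 := by simp [f, ← Complex.ofReal_pow]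
  have h := hf.circleAverage_poissonKernel_smul (w := -r) (by simpa using hr)
  simp only [circleAverage_zero_one_eq_integral, smul_eq_mul, Pi.mul_apply, hf_circle,
    poissonKernel_exp_mul_I, div_mul_eq_mul_div, mul_div_assoc, integral_const_mul,
    hf_center] at h
  have hr2 : 1 - r ^ 2 ≠ 0 := by nlinarith [sq_abs r, abs_nonneg r]
  field_simp at h
  exact h

theorem integral_cos_mul_log_one_add_two_mul_cos_add_sq {r : ℝ} (hr : |r| < 1) :
    ∫ x in 0..2 * π, cos x * log (1 + 2 * r * cos x + r ^ 2) = 2 * π * r := by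
  have hD := fun x ↦ (one_add_two_mul_cos_add_sq_pos hr x).ne'
  have hlog (x : ℝ) : HasDerivAt (fun x ↦ log (1 + 2 * r * cos x + r ^ 2))
      (-(2 * r * sin x) / (1 + 2 * r * cos x + r ^ 2)) x := by
    have := (((hasDerivAt_cos x).const_mul (2 * r)).const_add 1).add_const (r ^ 2)
    simpa [mul_neg, neg_div] using this.log (hD x)
  have hparts := integral_mul_deriv_eq_deriv_mul (a := 0) (b := 2 * π)
    (fun x _ ↦ hlog x) (fun x _ ↦ hasDerivAt_sin x)
    (by apply Continuous.intervalIntegrable; fun_prop)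
    (continuous_cos.intervalIntegrable _ _)
  calc ∫ x in 0..2 * π, cos x * log (1 + 2 * r * cos x + r ^ 2)
      = 2 * r * ∫ x in 0..2 * π, sin x ^ 2 / (1 + 2 * r * cos x + r ^ 2) := by
        simp_rw [mul_comm (cos _), hparts, sin_two_pi, sin_zero, ← integral_const_mul]
        simp only [mul_zero, sub_zero, zero_sub, ← integral_neg]
        congr 1 with x
        ring
    _ = 2 * π * r := by
        rw [integral_sin_sq_div_one_add_two_mul_cos_add_sq hr]; ring

theorem integral_add_mul_cos_mul_log_one_add_two_mul_cos_add_sq (α β : ℝ) {r : ℝ}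
    (hr : |r| < 1) :
    ∫ x in 0..2 * π, (α + β * cos x) * log (1 + 2 * r * cos x + r ^ 2) = 2 * π * β * r := by
  have hD := fun x ↦ (one_add_two_mul_cos_add_sq_pos hr x).ne'
  have hL : Continuous fun x ↦ log (1 + 2 * r * cos x + r ^ 2) := by fun_prop
  have hcL : Continuous fun x ↦ cos x * log (1 + 2 * r * cos x + r ^ 2) := by fun_prop
  calc _ = ∫ x in 0..2 * π, α * log (1 + 2 * r * cos x + r ^ 2) +
        β * (cos x * log (1 + 2 * r * cos x + r ^ 2)) := by
        congr 1 with x; ring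
    _ = 2 * π * β * r := by
        rw [integral_add ((hL.intervalIntegrable _ _).const_mul _)
            ((hcL.intervalIntegrable _ _).const_mul _),
          integral_const_mul, integral_const_mul, integral_log_one_add_two_mul_cos_add_sq hr.le,
          integral_cos_mul_log_one_add_two_mul_cos_add_sq hr]
        ring

theorem integral_add_mul_cos (α β : ℝ) : ∫ x in 0..2 * π, (α + β * cos x) = 2 * π * α := by
  simp [integral_add, integral_const_mul]

theorem integral_add_mul_cos_mul_log_add_mul_cos (α β : ℝ) {a b : ℝ} (hba : |b| < a) :
    ∫ x in 0..2 * π, (α + β * cos x) * log (a + b * cos x) =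
      2 * π * α * log ((a + √(a ^ 2 - b ^ 2)) / 2) + 2 * π * β * ((a - √(a ^ 2 - b ^ 2)) / b) := by
  set s := √(a ^ 2 - b ^ 2)
  have hs : s ^ 2 = a ^ 2 - b ^ 2 := sq_sqrt (by nlinarith [sq_abs b, abs_nonneg b])
  have has : 0 < a + s := by linarith [abs_nonneg b, sqrt_nonneg (a ^ 2 - b ^ 2)]
  set r := b / (a + s)
  have hr : |r| < 1 := by
    rw [abs_div, abs_of_pos has, div_lt_one has]; linarith [sqrt_nonneg (a ^ 2 - b ^ 2)]
  have hfactor (x : ℝ) : a + b * cos x = (a + s) / 2 * (1 + 2 * r * cos x + r ^ 2) := by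
    simp only [r]; field_simp; linear_combination -hs
  have hr_eq : r = (a - s) / b := by
    rcases eq_or_ne b 0 with rfl | hb
    · simp [r, s, sqrt_sq (abs_nonneg _ |>.trans hba.le)]
    · simp only [r]; field_simp; linear_combination hs
  have hD := fun x ↦ (one_add_two_mul_cos_add_sq_pos hr x).ne'
  have hL : Continuous fun x ↦ (α + β * cos x) * log (1 + 2 * r * cos x + r ^ 2) := by fun_prop
  calc _ = ∫ x in 0..2 * π, ((α + β * cos x) * log ((a + s) / 2) +
        (α + β * cos x) * log (1 + 2 * r * cos x + r ^ 2)) := by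
        congr 1 with x
        rw [hfactor, log_mul (by positivity) (hD x), mul_add]
    _ = _ := by
        rw [integral_add (by apply Continuous.intervalIntegrable; fun_prop)
            (hL.intervalIntegrable _ _), integral_mul_const, integral_add_mul_cos,
          integral_add_mul_cos_mul_log_one_add_two_mul_cos_add_sq α β hr, hr_eq]

theorem integral_add_mul_cos_mul_log_add_mul_cos_self {a : ℝ} (ha : 0 < a) :
    ∫ x in 0..2 * π, (a + a * cos x) * log (a + a * cos x) = 2 * π * a * (1 + log (a / 2)) := by
  set Φ := fun b ↦ ∫ x in 0..2 * π, (a + b * cos x) * log (a + b * cos x)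
  set ψ := fun b ↦ 2 * π * a * log ((a + √(a ^ 2 - b ^ 2)) / 2) + 2 * π * (a - √(a ^ 2 - b ^ 2))
  have hΦ : Continuous Φ := by
    have : Continuous fun p : ℝ × ℝ ↦ (a + p.1 * cos p.2) * log (a + p.1 * cos p.2) :=
      continuous_mul_log.comp (by fun_prop)
    exact continuous_parametric_intervalIntegral_of_continuous' this _ _
  have hψ : ContinuousAt ψ a := by
    have : (a + √(a ^ 2 - a ^ 2)) / 2 ≠ 0 := by simp [ha.ne']
    fun_prop (disch := exact this)
  have hΦψ : Φ =ᶠ[𝓝[<] a] ψ := by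
    filter_upwards [Ioo_mem_nhdsLT ha] with b ⟨hb0, hba⟩
    simp only [Φ, ψ, integral_add_mul_cos_mul_log_add_mul_cos a b (by rwa [abs_of_pos hb0]),
      mul_assoc _ b, mul_div_cancel₀ _ hb0.ne']
  have h := tendsto_nhds_unique (hΦ.continuousWithinAt (s := Set.Iio a))
    ((hψ.continuousWithinAt (s := Set.Iio a)).congr' hΦψ.symm)
  simp only [Φ, ψ, sub_self, sqrt_zero, add_zero] at h
  rw [h]; ring

theorem Function.Periodic.intervalIntegral_comp_intCast_mul {E : Type*} [NormedAddCommGroup E]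
    [NormedSpace ℝ E] {f : ℝ → E} {T : ℝ} (hf : Function.Periodic f T)
    (h_int : ∀ t₁ t₂, IntervalIntegrable f MeasureTheory.volume t₁ t₂) {n : ℤ} (hn : n ≠ 0) :
    ∫ x in 0..T, f (n * x) = ∫ x in 0..T, f x := by
  have hn' : (n : ℝ) ≠ 0 := Int.cast_ne_zero.2 hn
  rw [integral_comp_mul_left _ hn', mul_zero, ← zero_add (n * T), ← zsmul_eq_mul,
    hf.intervalIntegral_add_zsmul_eq n 0 h_int, zero_add, ← Int.cast_smul_eq_zsmul ℝ, smul_smul,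
    inv_mul_cancel₀ hn', one_smul]

theorem integral_cos_sq_mul_log_cos_sq :
    ∫ y in 0..2 * π, cos y ^ 2 * log (cos y ^ 2) = π * (1 - 2 * log 2) := by
  set g := fun x ↦ (1 / 2 + 1 / 2 * cos x) * log (1 / 2 + 1 / 2 * cos x)
  have hg : Continuous g := continuous_mul_log.comp (by fun_prop)
  have hper : Function.Periodic g (2 * π) := fun x ↦ by simp [g]
  calc _ = ∫ y in 0..2 * π, g ((2 : ℤ) * y) := by
        congr 1 with y; simp only [g, cos_sq y]; push_cast; ring_nf
    _ = _ := by
        rw [hper.intervalIntegral_comp_intCast_mul (fun _ _ ↦ hg.intervalIntegrable _ _) two_ne_zero,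
          integral_add_mul_cos_mul_log_add_mul_cos_self one_half_pos,
          show (1 / 2 / 2 : ℝ) = (2 ^ 2)⁻¹ by norm_num, log_inv, log_pow]
        push_cast; ring

theorem integral_log_cos_general (a b α β : ℝ) (ha : 0 < a)
    (hba : |b| < a) :
    (∫ x in (0:ℝ)..(2 * π), (α + β * Real.cos x) * Real.log (a + b * Real.cos x)) =
      2 * π * α * Real.log ((a + Real.sqrt (a ^ 2 - b ^ 2)) / 2) +
        2 * π * β * ((a - Real.sqrt (a ^ 2 - b ^ 2)) / b) ∧
    (∫ x in (0:ℝ)..(2 * π), (a + a * Real.cos x) * Real.log (a + a * Real.cos x)) =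
      2 * π * a * (1 + Real.log (a / 2)) ∧
    (∫ y in (0:ℝ)..(2 * π), Real.cos y ^ 2 * Real.log (Real.cos y ^ 2)) =
      π * (1 - 2 * Real.log 2) :=
  ⟨integral_add_mul_cos_mul_log_add_mul_cos α β hba,
    integral_add_mul_cos_mul_log_add_mul_cos_self ha, integral_cos_sq_mul_log_cos_sq⟩

/-- Evaluation of `∫₀^{2π} (α + β cos x) log(a + b cos x) dx`
for `0 < |b| < a`, together with the boundary case `b = a` (where the convention
`0·log 0 = 0` is automatic since `Real.log 0 = 0`) and the special case
`∫₀^{2π} cos²y · log(cos²y) dy = π(1 − 2 log 2)`. -/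
theorem integral_log_cos (a b α β : ℝ) (ha : 0 < a)
    (hb : 0 < |b|) (hba : |b| < a) :
    (∫ x in (0:ℝ)..(2 * π), (α + β * Real.cos x) * Real.log (a + b * Real.cos x)) =
      2 * π * α * Real.log ((a + Real.sqrt (a ^ 2 - b ^ 2)) / 2) +
        2 * π * β * ((a - Real.sqrt (a ^ 2 - b ^ 2)) / b) ∧
    (∫ x in (0:ℝ)..(2 * π), (a + a * Real.cos x) * Real.log (a + a * Real.cos x)) =
      2 * π * a * (1 + Real.log (a / 2)) ∧
    (∫ y in (0:ℝ)..(2 * π), Real.cos y ^ 2 * Real.log (Real.cos y ^ 2)) =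
      π * (1 - 2 * Real.log 2) :=
  integral_log_cos_general a b α β ha hba
end
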